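/- arXiv:1910.12078 — 14 statements merged into one kernel-verified Lean document; each statement's English description precedes it below -/
import Mathlib

section
/- If L is a vector lattice, V an Archimedean vector lattice, and ⟨·,·⟩ : L × L → V is a bilinear map that is positive (⟨f,g⟩ ≥ 0 for f,g ≥ 0) and orthosymmetric (⟨f,g⟩ = 0 whenever f ∧ g = 0), then for every f ∈ L one has ⟨f,f⟩ = ⟨|f|,|f|⟩ and ⟨f,f⟩ ≥ 0. -/
/-- For a positive, orthosymmetric (symmetric) bilinear map
`B : L × L → V` on a vector lattice `L` with values in an Archimedean vector
lattice `V`, one has `⟨f,f⟩ = ⟨|f|,|f|⟩ ≥ 0` for every `f`. -/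
theorem stmt0 {L V : Type*}
    [AddCommGroup L] [Lattice L] [Module ℝ L]
    [CovariantClass L L (· + ·) (· ≤ ·)]
    [AddCommGroup V] [Lattice V] [Module ℝ V]
    [CovariantClass V V (· + ·) (· ≤ ·)]
    (B : L →ₗ[ℝ] L →ₗ[ℝ] V)
    (hpos : ∀ f g : L, 0 ≤ f → 0 ≤ g → 0 ≤ B f g)
    (hortho : ∀ f g : L, f ⊓ g = 0 → B f g = 0)
    (hsymm : ∀ f g : L, B f g = B g f)
    (f : L) : B f f = B |f| |f| ∧ 0 ≤ B f f := by
  have hp : (0:L) ≤ f⁺ := posPart_nonneg f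
  have hn : (0:L) ≤ f⁻ := negPart_nonneg f
  have h1 : f⁺ ⊓ f⁻ = 0 := posPart_inf_negPart_eq_zero f
  have h2 : f⁻ ⊓ f⁺ = 0 := by rw [inf_comm]; exact h1
  have hpn : B f⁺ f⁻ = 0 := hortho _ _ h1
  have hnp : B f⁻ f⁺ = 0 := hortho _ _ h2
  have hf : f = f⁺ - f⁻ := (posPart_sub_negPart f).symm
  have habs : |f| = f⁺ + f⁻ := (posPart_add_negPart f).symm
  have key : B f f = B f⁺ f⁺ + B f⁻ f⁻ := by
    conv_lhs => rw [hf]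
    simp only [map_sub, LinearMap.sub_apply, hpn, hnp]
    abel
  constructor
  · rw [key]; conv_rhs => rw [habs]
    simp only [map_add, LinearMap.add_apply, hpn, hnp]
    abel
  · rw [key]
    exact add_nonneg (hpos _ _ hp hp) (hpos _ _ hn hn)
end

section
/- Let L be an orthosymmetric space over an Archimedean vector lattice V with symmetric orthosymmetric product. If f ∈ L satisfies ⟨f,f⟩ = 0, then ⟨f,g⟩ = 0 for all g ∈ L. Consequently, the neutral part L⁰ = {f ∈ L : ⟨f,f⟩ = 0} equals {f ∈ L : ⟨f,g⟩ = 0 for all g ∈ L}. -/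
theorem stmt1 {L V : Type*}
    [AddCommGroup L] [Lattice L] [Module ℝ L]
    [CovariantClass L L (· + ·) (· ≤ ·)]
    [AddCommGroup V] [Lattice V] [Module ℝ V]
    [CovariantClass V V (· + ·) (· ≤ ·)]
    (B : L →ₗ[ℝ] L →ₗ[ℝ] V)
    (hpos : ∀ f g : L, 0 ≤ f → 0 ≤ g → 0 ≤ B f g)
    (hortho : ∀ f g : L, f ⊓ g = 0 → B f g = 0)
    (hsymm : ∀ f g : L, B f g = B g f)
    (hV : ∀ u v : V, (∀ n : ℕ, n • u ≤ v) → u ≤ 0)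
    :
    {f : L | B f f = 0} = {f : L | ∀ g : L, B f g = 0} := by
  have hcross : ∀ x : L, B x⁺ x⁻ = 0 := fun x =>
    hortho _ _ (posPart_inf_negPart_eq_zero x)
  have hexp : ∀ x : L, B x x = B x⁺ x⁺ + B x⁻ x⁻ := by
    intro x
    conv_lhs => rw [← posPart_sub_negPart x]
    simp only [map_sub, LinearMap.sub_apply]
    rw [hcross, hsymm x⁻ x⁺, hcross]
    abel
  have hnn : ∀ x : L, 0 ≤ B x x := by
    intro x
    rw [hexp]
    exact add_nonneg (hpos _ _ (posPart_nonneg x) (posPart_nonneg x))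
      (hpos _ _ (negPart_nonneg x) (negPart_nonneg x))
  have key : ∀ p q : L, 0 ≤ p → 0 ≤ q → B p p = 0 → B p q = 0 := by
    intro p q hp hq hpp
    have hpq : 0 ≤ B p q := hpos _ _ hp hq
    have hmain : ∀ n : ℕ, n • (2 • B p q) ≤ B q q := by
      intro n
      have h1 : 0 ≤ B ((n : ℝ) • p - q) ((n : ℝ) • p - q) := hnn _
      have e : B ((n : ℝ) • p - q) ((n : ℝ) • p - q)
          = B q q - (n • (2 • B p q)) := by
        simp only [map_sub, LinearMap.sub_apply, map_smul, LinearMap.smul_apply,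
          hpp, smul_zero, hsymm q p]
        rw [two_smul, smul_add, ← Nat.cast_smul_eq_nsmul ℝ n (B p q), zero_sub, smul_neg]
        abel
      rw [e] at h1
      exact sub_nonneg.1 h1
    have h2 : 2 • B p q ≤ 0 := hV _ _ hmain
    have h3 : B p q ≤ 2 • B p q := by
      rw [two_smul]; exact le_add_of_nonneg_left hpq
    exact le_antisymm (h3.trans h2) hpq
  ext f
  simp only [Set.mem_setOf_eq]
  constructor
  · intro hf g
    have hsum := (hexp f).symm.trans hf
    have h1 : 0 ≤ B f⁺ f⁺ := hpos _ _ (posPart_nonneg f) (posPart_nonneg f)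
    have h2 : 0 ≤ B f⁻ f⁻ := hpos _ _ (negPart_nonneg f) (negPart_nonneg f)
    have hfp : B f⁺ f⁺ = 0 :=
      le_antisymm (hsum ▸ le_add_of_nonneg_right h2) h1
    have hfn : B f⁻ f⁻ = 0 := by
      have := hsum; rw [hfp, zero_add] at this; exact this
    have k1 := key f⁺ g⁺ (posPart_nonneg f) (posPart_nonneg g) hfp
    have k2 := key f⁺ g⁻ (posPart_nonneg f) (negPart_nonneg g) hfp
    have k3 := key f⁻ g⁺ (negPart_nonneg f) (posPart_nonneg g) hfn
    have k4 := key f⁻ g⁻ (negPart_nonneg f) (negPart_nonneg g) hfn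
    rw [← posPart_sub_negPart f, ← posPart_sub_negPart g]
    simp only [map_sub, LinearMap.sub_apply, k1, k2, k3, k4]
    abel
  · intro h
    exact h f
end

section
/- Let L be an orthosymmetric space over an Archimedean vector lattice V with symmetric orthosymmetric product. Then the neutral part L⁰ = {f ∈ L : ⟨f,f⟩ = 0} is an ideal of L: it is a vector subspace, closed under absolute value, and solid (if 0 ≤ f ≤ g and g ∈ L⁰ then f ∈ L⁰). -/
section Aux

variable {L V : Type*}
    [AddCommGroup L] [Lattice L] [Module ℝ L]
    [CovariantClass L L (· + ·) (· ≤ ·)]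
    [AddCommGroup V] [Lattice V] [Module ℝ V]
    [CovariantClass V V (· + ·) (· ≤ ·)]
    (B : L →ₗ[ℝ] L →ₗ[ℝ] V)

lemma aux_decomp
    (hortho : ∀ f g : L, f ⊓ g = 0 → B f g = 0)
    (f : L) : B f f = B f⁺ f⁺ + B f⁻ f⁻ := by
  have h1 : B f⁺ f⁻ = 0 := hortho _ _ (posPart_inf_negPart_eq_zero f)
  have h2 : B f⁻ f⁺ = 0 := hortho _ _ (by rw [inf_comm]; exact posPart_inf_negPart_eq_zero f)
  conv_lhs => rw [← posPart_sub_negPart f]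
  simp only [map_sub, LinearMap.sub_apply, h1, h2]
  abel

lemma aux_nonneg_sq
    (hpos : ∀ f g : L, 0 ≤ f → 0 ≤ g → 0 ≤ B f g)
    (hortho : ∀ f g : L, f ⊓ g = 0 → B f g = 0)
    (f : L) : 0 ≤ B f f := by
  rw [aux_decomp B hortho f]
  have h1 : 0 ≤ B f⁺ f⁺ := hpos _ _ (posPart_nonneg f) (posPart_nonneg f)
  have h2 : 0 ≤ B f⁻ f⁻ := hpos _ _ (negPart_nonneg f) (negPart_nonneg f)
  calc (0:V) ≤ B f⁺ f⁺ := h1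
    _ = B f⁺ f⁺ + 0 := by rw [add_zero]
    _ ≤ B f⁺ f⁺ + B f⁻ f⁻ := add_le_add_right h2 _

lemma aux_cross
    (hpos : ∀ f g : L, 0 ≤ f → 0 ≤ g → 0 ≤ B f g)
    (hortho : ∀ f g : L, f ⊓ g = 0 → B f g = 0)
    (hsymm : ∀ f g : L, B f g = B g f)
    (hV : ∀ u v : V, (∀ n : ℕ, n • u ≤ v) → u ≤ 0)
    (a b : L) (ha : 0 ≤ a) (hb : 0 ≤ b) (haa : B a a = 0) :
    B a b = 0 := by
  set x := B a b with hx
  have hbound : ∀ n : ℕ, n • (x + x) ≤ B b b := by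
    intro n
    set w : L := (n : ℝ) • a - b with hw
    have h2 : 0 ≤ B w w := aux_nonneg_sq B hpos hortho w
    have h3 : B w w = B b b - (n : ℝ) • (x + x) := by
      simp only [hw, map_sub, map_smul, LinearMap.sub_apply, LinearMap.smul_apply, haa,
        smul_zero, hsymm b a, smul_add, ← hx]
      module
    have h4 : (n : ℝ) • (x + x) ≤ B b b := by
      rw [h3] at h2
      exact sub_nonneg.mp h2
    rwa [Nat.cast_smul_eq_nsmul] at h4
  have hxx : x + x ≤ 0 := hV _ _ hbound
  have hx0 : 0 ≤ x := hpos a b ha hb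
  have hxle : x ≤ 0 := by
    calc x = x + 0 := (add_zero x).symm
      _ ≤ x + x := add_le_add_right hx0 x
      _ ≤ 0 := hxx
  exact le_antisymm hxle hx0

lemma aux_zero_all
    (hpos : ∀ f g : L, 0 ≤ f → 0 ≤ g → 0 ≤ B f g)
    (hortho : ∀ f g : L, f ⊓ g = 0 → B f g = 0)
    (hsymm : ∀ f g : L, B f g = B g f)
    (hV : ∀ u v : V, (∀ n : ℕ, n • u ≤ v) → u ≤ 0)
    (f : L) (hf : B f f = 0) : ∀ g : L, B f g = 0 := by
  intro g
  have hdec := aux_decomp B hortho f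
  have h1 : 0 ≤ B f⁺ f⁺ := hpos _ _ (posPart_nonneg f) (posPart_nonneg f)
  have h2 : 0 ≤ B f⁻ f⁻ := hpos _ _ (negPart_nonneg f) (negPart_nonneg f)
  have hpp : B f⁺ f⁺ = 0 := by
    have hle : B f⁺ f⁺ ≤ 0 := by
      calc B f⁺ f⁺ = B f⁺ f⁺ + 0 := (add_zero _).symm
        _ ≤ B f⁺ f⁺ + B f⁻ f⁻ := add_le_add_right h2 _
        _ = B f f := hdec.symm
        _ = 0 := hf
    exact le_antisymm hle h1
  have hnn : B f⁻ f⁻ = 0 := by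
    have hle : B f⁻ f⁻ ≤ 0 := by
      calc B f⁻ f⁻ = 0 + B f⁻ f⁻ := (zero_add _).symm
        _ ≤ B f⁺ f⁺ + B f⁻ f⁻ := add_le_add_left h1 _
        _ = B f f := hdec.symm
        _ = 0 := hf
    exact le_antisymm hle h2
  have c1 : B f⁺ g⁺ = 0 := aux_cross B hpos hortho hsymm hV _ _ (posPart_nonneg f) (posPart_nonneg g) hpp
  have c2 : B f⁺ g⁻ = 0 := aux_cross B hpos hortho hsymm hV _ _ (posPart_nonneg f) (negPart_nonneg g) hpp
  have c3 : B f⁻ g⁺ = 0 := aux_cross B hpos hortho hsymm hV _ _ (negPart_nonneg f) (posPart_nonneg g) hnn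
  have c4 : B f⁻ g⁻ = 0 := aux_cross B hpos hortho hsymm hV _ _ (negPart_nonneg f) (negPart_nonneg g) hnn
  calc B f g = B (f⁺ - f⁻) (g⁺ - g⁻) := by rw [posPart_sub_negPart, posPart_sub_negPart]
    _ = 0 := by
        simp only [map_sub, LinearMap.sub_apply, c1, c2, c3, c4]
        abel

end Aux

theorem stmt2 {L V : Type*}
    [AddCommGroup L] [Lattice L] [Module ℝ L]
    [CovariantClass L L (· + ·) (· ≤ ·)]
    [AddCommGroup V] [Lattice V] [Module ℝ V]
    [CovariantClass V V (· + ·) (· ≤ ·)]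
    (B : L →ₗ[ℝ] L →ₗ[ℝ] V)
    (hpos : ∀ f g : L, 0 ≤ f → 0 ≤ g → 0 ≤ B f g)
    (hortho : ∀ f g : L, f ⊓ g = 0 → B f g = 0)
    (hsymm : ∀ f g : L, B f g = B g f)
    (hV : ∀ u v : V, (∀ n : ℕ, n • u ≤ v) → u ≤ 0)
    :
    (∀ f g : L, B f f = 0 → B g g = 0 → B (f + g) (f + g) = 0) ∧
    (∀ (r : ℝ) (f : L), B f f = 0 → B (r • f) (r • f) = 0) ∧
    (∀ f : L, B f f = 0 → B |f| |f| = 0) ∧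
    (∀ f g : L, 0 ≤ f → f ≤ g → B g g = 0 → B f f = 0) := by
  refine ⟨?_, ?_, ?_, ?_⟩
  · intro f g hf hg
    have h1 := aux_zero_all B hpos hortho hsymm hV f hf
    have h2 := aux_zero_all B hpos hortho hsymm hV g hg
    simp [h1, h2]
  · intro r f hf
    simp only [map_smul, LinearMap.smul_apply, hf, smul_zero]
  · intro f hf
    have hdec := aux_decomp B hortho f
    have habs : B |f| |f| = B f⁺ f⁺ + B f⁻ f⁻ + (B f⁺ f⁻ + B f⁻ f⁺) := by
      conv_lhs => rw [← posPart_add_negPart f]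
      simp only [map_add, LinearMap.add_apply]
      abel
    have h1 : B f⁺ f⁻ = 0 := hortho _ _ (posPart_inf_negPart_eq_zero f)
    have h2 : B f⁻ f⁺ = 0 := hortho _ _ (by rw [inf_comm]; exact posPart_inf_negPart_eq_zero f)
    rw [habs, h1, h2, ← hdec, hf]
    abel
  · intro f g hf hfg hg
    have hgf : 0 ≤ g - f := sub_nonneg.mpr hfg
    have hge : 0 ≤ f := hf
    have h1 : 0 ≤ B (g - f) (g - f) := hpos _ _ hgf hgf
    have h2 : 0 ≤ B (g - f) f := hpos _ _ hgf hge
    have h3 : 0 ≤ B f (g - f) := hpos _ _ hge hgf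
    have hdecomp : B g g = B (g - f) (g - f) + B (g - f) f + B f (g - f) + B f f := by
      conv_lhs => rw [show g = (g - f) + f by abel]
      simp only [map_add, LinearMap.add_apply]
      abel
    have hle : B f f ≤ B g g := by
      rw [hdecomp]
      calc B f f = 0 + B f f := (zero_add _).symm
        _ ≤ (B (g-f) (g-f) + B (g-f) f + B f (g-f)) + B f f := by
            refine add_le_add_left ?_ _
            calc (0:V) ≤ B (g-f) (g-f) := h1
              _ = B (g-f) (g-f) + 0 + 0 := by abel
              _ ≤ B (g-f) (g-f) + B (g-f) f + B f (g-f) := by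
                  refine add_le_add ?_ h3
                  exact add_le_add_right h2 _
        _ = B (g-f) (g-f) + B (g-f) f + B f (g-f) + B f f := by abel
    have hge0 : 0 ≤ B f f := aux_nonneg_sq B hpos hortho f
    exact le_antisymm (hle.trans hg.le) hge0
end

section
/- Any definite orthosymmetric space over an Archimedean vector lattice is Archimedean: if L is an orthosymmetric space with ⟨f,f⟩ = 0 implying f = 0, and f,g ∈ L⁺ satisfy 0 ≤ n·f ≤ g for all n ∈ ℕ, then f = 0. -/
theorem stmt3 {L V : Type*}
    [AddCommGroup L] [Lattice L] [Module ℝ L]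
    [CovariantClass L L (· + ·) (· ≤ ·)]
    [AddCommGroup V] [Lattice V] [Module ℝ V]
    [CovariantClass V V (· + ·) (· ≤ ·)]
    (B : L →ₗ[ℝ] L →ₗ[ℝ] V)
    (hpos : ∀ f g : L, 0 ≤ f → 0 ≤ g → 0 ≤ B f g)
    (hortho : ∀ f g : L, f ⊓ g = 0 → B f g = 0)
    (hsymm : ∀ f g : L, B f g = B g f)
    (hV : ∀ u v : V, (∀ n : ℕ, n • u ≤ v) → u ≤ 0)
    (hdef : ∀ f : L, B f f = 0 → f = 0)
    (f g : L) (hf : 0 ≤ f) (hg : 0 ≤ g) (h : ∀ n : ℕ, n • f ≤ g) :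
    f = 0 := by
  apply hdef
  have key : ∀ n : ℕ, n • (B f f) ≤ B g f := by
    intro n
    have h1 : 0 ≤ g - n • f := sub_nonneg.mpr (h n)
    have h2 : 0 ≤ B (g - n • f) f := hpos _ _ h1 hf
    have h3 : B (g - n • f) f = B g f - n • (B f f) := by
      rw [map_sub, map_nsmul]
      simp
    rw [h3] at h2
    exact sub_nonneg.mp h2
  have hle : B f f ≤ 0 := hV _ _ key
  exact le_antisymm hle (hpos f f hf hf)
end

section
/- Let L be an orthosymmetric space over an Archimedean vector lattice V with symmetric product, and let L⁰ be its neutral part. Then the formula ⟨[f],[g]⟩ := ⟨f,g⟩ gives a well-defined V-valued orthosymmetric product on the quotient vector lattice L/L⁰, and with this product L/L⁰ is a definite orthosymmetric space. -/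
theorem stmt4 {L V : Type*}
    [AddCommGroup L] [Lattice L] [Module ℝ L]
    [CovariantClass L L (· + ·) (· ≤ ·)]
    [AddCommGroup V] [Lattice V] [Module ℝ V]
    [CovariantClass V V (· + ·) (· ≤ ·)]
    (B : L →ₗ[ℝ] L →ₗ[ℝ] V)
    (hpos : ∀ f g : L, 0 ≤ f → 0 ≤ g → 0 ≤ B f g)
    (hortho : ∀ f g : L, f ⊓ g = 0 → B f g = 0)
    (hsymm : ∀ f g : L, B f g = B g f)
    (hV : ∀ u v : V, (∀ n : ℕ, n • u ≤ v) → u ≤ 0)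
    :
    -- well-definedness of the product on the quotient L/L⁰
    (∀ f g h k : L, B h h = 0 → B k k = 0 → B (f + h) (g + k) = B f g) ∧
    -- positivity: if [f] ≥ 0 and [g] ≥ 0 in L/L⁰ then ⟨[f],[g]⟩ ≥ 0
    (∀ f g : L, (∃ h : L, B h h = 0 ∧ h ≤ f) → (∃ k : L, B k k = 0 ∧ k ≤ g) →
      0 ≤ B f g) ∧
    -- orthosymmetry: if [f] ⊓ [g] = [f ⊓ g] = 0 in L/L⁰ then ⟨[f],[g]⟩ = 0
    (∀ f g : L, B (f ⊓ g) (f ⊓ g) = 0 → B f g = 0) ∧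
    -- definiteness of the quotient: ⟨[f],[f]⟩ = 0 implies [f] = [0]
    (∀ f : L, B f f = 0 → f ∈ {h : L | B h h = 0}) := by
  -- B x x ≥ 0 for all x
  have hsd : ∀ x : L, 0 ≤ B x x := by
    intro x
    have hx : x = x⁺ - x⁻ := (posPart_sub_negPart x).symm
    have h1 : B x⁺ x⁻ = 0 := hortho _ _ (posPart_inf_negPart_eq_zero x)
    have h2 : B x⁻ x⁺ = 0 := (hsymm _ _).trans h1
    calc (0:V) ≤ B x⁺ x⁺ + B x⁻ x⁻ :=
          add_nonneg (hpos _ _ (posPart_nonneg x) (posPart_nonneg x))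
            (hpos _ _ (negPart_nonneg x) (negPart_nonneg x))
      _ = B x x := by
          conv_rhs => rw [hx]
          simp only [map_sub, LinearMap.sub_apply, h1, h2]
          abel
  -- degenerate vectors are in the radical
  have hdeg : ∀ h x : L, B h h = 0 → B h x = 0 := by
    intro h x hh
    have key : ∀ y : L, B h y ≤ 0 := by
      intro y
      refine hV (B h y) (B y y) ?_
      intro n
      have hexp : 0 ≤ B (((n:ℝ)/2) • h - y) (((n:ℝ)/2) • h - y) := hsd _
      have heq : B (((n:ℝ)/2) • h - y) (((n:ℝ)/2) • h - y)
          = B y y - (n:ℝ) • B h y := by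
        simp only [map_sub, map_smul, LinearMap.sub_apply, LinearMap.smul_apply,
          smul_sub, hh, smul_zero, smul_smul, hsymm y h]
        have : ((n:ℝ)/2) • (B h) y + ((n:ℝ)/2) • (B h) y = (n:ℝ) • B h y := by
          rw [← add_smul]; ring_nf
        rw [← this]
        abel
      rw [heq] at hexp
      calc n • B h y = (n:ℝ) • B h y := (Nat.cast_smul_eq_nsmul ℝ n (B h y)).symm
        _ ≤ B y y := sub_nonneg.mp hexp
    have h1 : B h x ≤ 0 := key x
    have h2' : -B h x ≤ 0 := by simpa using key (-x)
    exact le_antisymm h1 (neg_nonpos.mp h2')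
  have hdeg' : ∀ h x : L, B h h = 0 → B x h = 0 := fun h x hh => (hsymm x h).trans (hdeg h x hh)
  have wd : ∀ f g h k : L, B h h = 0 → B k k = 0 → B (f + h) (g + k) = B f g := by
    intro f g h k hh hk
    simp [map_add, LinearMap.add_apply, hdeg h g hh, hdeg h k hh, hdeg' k f hk]
  refine ⟨wd, ?_, ?_, fun f hf => hf⟩
  · rintro f g ⟨h, hh, hhf⟩ ⟨k, hk, hkg⟩
    have : B f g = B ((f - h) + h) ((g - k) + k) := by rw [sub_add_cancel, sub_add_cancel]
    rw [this, wd _ _ _ _ hh hk]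
    exact hpos _ _ (sub_nonneg.mpr hhf) (sub_nonneg.mpr hkg)
  · intro f g hm
    set m := f ⊓ g with hmdef
    have h1 : B f g = B ((f - m) + m) ((g - m) + m) := by rw [sub_add_cancel, sub_add_cancel]
    rw [h1, wd _ _ _ _ hm hm]
    refine hortho _ _ ?_
    have h2 : (f ⊓ g) + (-m) = (f + -m) ⊓ (g + -m) := (OrderIso.addRight (-m)).map_inf f g
    have : (f - m) ⊓ (g - m) = (f ⊓ g) - m := by
      simpa [sub_eq_add_neg] using h2.symm
    rw [this, ← hmdef, sub_self]
end

section
/- Let L be a vector lattice, M an ordered vector space, and T : L → M a positive linear operator such that (i) ker T is a vector sublattice of L, and (ii) for every f ∈ L with Tf ≥ 0 one has f⁻ ∈ ker T. Then for all f,g ∈ L, T(f ∨ g) is the supremum of {Tf, Tg} within the range Im T; hence Im T is a lattice-subspace of M and T is a lattice homomorphism from L onto Im T. -/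
/-- a positive operator `T` from a vector lattice `L` to an ordered
vector space `M` whose kernel is a vector sublattice and such that `T f ≥ 0`
implies `f⁻ ∈ ker T`, maps `f ⊔ g` to the supremum of `{T f, T g}` within the
range of `T`; hence `Im T` is a lattice-subspace and `T` is a lattice
homomorphism onto it. -/
theorem stmt6 {L M : Type*}
    [AddCommGroup L] [Lattice L] [Module ℝ L]
    [CovariantClass L L (· + ·) (· ≤ ·)]
    [AddCommGroup M] [PartialOrder M] [Module ℝ M]
    [CovariantClass M M (· + ·) (· ≤ ·)]
    (T : L →ₗ[ℝ] M)
    (hpos : ∀ f : L, 0 ≤ f → 0 ≤ T f)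
    (hker_sup : ∀ f g : L, T f = 0 → T g = 0 → T (f ⊔ g) = 0)
    (hker_inf : ∀ f g : L, T f = 0 → T g = 0 → T (f ⊓ g) = 0)
    (hneg : ∀ f : L, 0 ≤ T f → T (f⁻) = 0)
    (f g : L) :
    T f ≤ T (f ⊔ g) ∧ T g ≤ T (f ⊔ g) ∧
      ∀ h : L, T f ≤ T h → T g ≤ T h → T (f ⊔ g) ≤ T h := by
  have mono : ∀ a b : L, a ≤ b → T a ≤ T b := by
    intro a b hab
    have h0 := hpos (b - a) (sub_nonneg.2 hab)
    rw [map_sub] at h0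
    exact sub_nonneg.mp h0
  refine ⟨mono _ _ le_sup_left, mono _ _ le_sup_right, ?_⟩
  intro h hf hg
  have hfh : T ((f - h)⁺) = 0 := by
    have := hneg (h - f) (by rw [map_sub]; exact sub_nonneg.2 hf)
    rwa [show (h - f)⁻ = (f - h)⁺ by rw [← posPart_neg, neg_sub]] at this
  have hgh : T ((g - h)⁺) = 0 := by
    have := hneg (h - g) (by rw [map_sub]; exact sub_nonneg.2 hg)
    rwa [show (h - g)⁻ = (g - h)⁺ by rw [← posPart_neg, neg_sub]] at this
  have hsup : T ((f - h)⁺ ⊔ (g - h)⁺) = 0 := hker_sup _ _ hfh hgh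
  have heq : (f - h)⁺ ⊔ (g - h)⁺ = (f ⊔ g - h)⁺ := by
    simp only [posPart_def, sup_sub]
    rw [sup_sup_sup_comm, sup_idem]
  rw [heq] at hsup
  have hx := posPart_sub_negPart (f ⊔ g - h)
  have : T (f ⊔ g - h) = T ((f ⊔ g - h)⁺) - T ((f ⊔ g - h)⁻) := by
    rw [← map_sub, hx]
  rw [hsup, zero_sub, map_sub] at this
  have hnegpos : 0 ≤ T ((f ⊔ g - h)⁻) := hpos _ (negPart_nonneg _)
  have : T (f ⊔ g) - T h ≤ 0 := by
    rw [this]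
    exact neg_nonpos.mpr hnegpos
  exact sub_nonpos.mp this
end

section
/- Let L be an orthosymmetric space over an Archimedean vector lattice V with symmetric product, and for f ∈ L define Φ_f : L → V by Φ_f(g) = ⟨f,g⟩. Then: (i) if f ≥ 0 then Φ_f is a positive operator; (ii) Φ_f = Φ_{f⁺} − Φ_{f⁻}, so Φ_f is regular; (iii) Φ_f = 0 if and only if ⟨f,f⟩ = 0; (iv) Φ_f is positive if and only if ⟨f⁻,f⁻⟩ = 0. -/
private lemma key_zero {L V : Type*}
    [AddCommGroup L] [Lattice L] [Module ℝ L]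
    [CovariantClass L L (· + ·) (· ≤ ·)]
    [AddCommGroup V] [Lattice V] [Module ℝ V]
    [CovariantClass V V (· + ·) (· ≤ ·)]
    (B : L →ₗ[ℝ] L →ₗ[ℝ] V)
    (hpos : ∀ f g : L, 0 ≤ f → 0 ≤ g → 0 ≤ B f g)
    (hortho : ∀ f g : L, f ⊓ g = 0 → B f g = 0)
    (hsymm : ∀ f g : L, B f g = B g f)
    (hV : ∀ u v : V, (∀ n : ℕ, n • u ≤ v) → u ≤ 0)
    (h : L) (hh : 0 ≤ h) (hhh : B h h = 0) :
    ∀ g : L, 0 ≤ g → B h g = 0 := by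
  intro g hg
  have main : ∀ n : ℕ, n • (B h g + B h g) ≤ B g g := by
    intro n
    set x : L := (n : ℝ) • h - g with hx
    have hBpq : B (x⁺) (x⁻) = 0 := hortho _ _ (posPart_inf_negPart_eq_zero x)
    have hBqp : B (x⁻) (x⁺) = 0 := by rw [hsymm]; exact hBpq
    have hnonneg : 0 ≤ B x x := by
      have hd : x = x⁺ - x⁻ := (posPart_sub_negPart x).symm
      have hsum : B x x = B (x⁺) (x⁺) + B (x⁻) (x⁻) := by
        conv_lhs => rw [hd]
        simp only [map_sub, LinearMap.sub_apply, hBpq, hBqp]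
        rw [sub_zero, zero_sub, sub_neg_eq_add]
      rw [hsum]
      exact add_nonneg (hpos _ _ (posPart_nonneg x) (posPart_nonneg x))
        (hpos _ _ (negPart_nonneg x) (negPart_nonneg x))
    have hexp : B x x = B g g - (n : ℝ) • (B h g + B h g) := by
      simp only [hx, map_sub, map_smul, LinearMap.sub_apply, LinearMap.smul_apply, hhh,
        hsymm g h]
      simp only [smul_zero, smul_add, smul_sub]
      abel
    have h2 : (n : ℝ) • (B h g + B h g) ≤ B g g := by
      rw [hexp] at hnonneg
      exact sub_nonneg.mp hnonneg
    calc n • (B h g + B h g) = (n : ℝ) • (B h g + B h g) := by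
            rw [Nat.cast_smul_eq_nsmul]
      _ ≤ B g g := h2
  have h2le : B h g + B h g ≤ 0 := hV _ _ main
  have hge : 0 ≤ B h g := hpos _ _ hh hg
  have : B h g ≤ 0 := le_trans (le_add_of_nonneg_left hge) h2le
  exact le_antisymm this hge

private lemma key_zero' {L V : Type*}
    [AddCommGroup L] [Lattice L] [Module ℝ L]
    [CovariantClass L L (· + ·) (· ≤ ·)]
    [AddCommGroup V] [Lattice V] [Module ℝ V]
    [CovariantClass V V (· + ·) (· ≤ ·)]
    (B : L →ₗ[ℝ] L →ₗ[ℝ] V)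
    (hpos : ∀ f g : L, 0 ≤ f → 0 ≤ g → 0 ≤ B f g)
    (hortho : ∀ f g : L, f ⊓ g = 0 → B f g = 0)
    (hsymm : ∀ f g : L, B f g = B g f)
    (hV : ∀ u v : V, (∀ n : ℕ, n • u ≤ v) → u ≤ 0)
    (h : L) (hh : 0 ≤ h) (hhh : B h h = 0) :
    ∀ g : L, B h g = 0 := by
  intro g
  have := key_zero B hpos hortho hsymm hV h hh hhh
  have hd : g = g⁺ - g⁻ := (posPart_sub_negPart g).symm
  rw [hd, map_sub, this _ (posPart_nonneg g), this _ (negPart_nonneg g), sub_zero]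

theorem stmt8 {L V : Type*}
    [AddCommGroup L] [Lattice L] [Module ℝ L]
    [CovariantClass L L (· + ·) (· ≤ ·)]
    [AddCommGroup V] [Lattice V] [Module ℝ V]
    [CovariantClass V V (· + ·) (· ≤ ·)]
    (B : L →ₗ[ℝ] L →ₗ[ℝ] V)
    (hpos : ∀ f g : L, 0 ≤ f → 0 ≤ g → 0 ≤ B f g)
    (hortho : ∀ f g : L, f ⊓ g = 0 → B f g = 0)
    (hsymm : ∀ f g : L, B f g = B g f)
    (hV : ∀ u v : V, (∀ n : ℕ, n • u ≤ v) → u ≤ 0)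
    (f : L) :
    ((0 ≤ f) → ∀ g : L, 0 ≤ g → 0 ≤ B f g) ∧
    (∀ g : L, B f g = B (f⁺) g - B (f⁻) g) ∧
    (∃ R S : L →ₗ[ℝ] V, (∀ g : L, 0 ≤ g → 0 ≤ R g) ∧ (∀ g : L, 0 ≤ g → 0 ≤ S g) ∧
      ∀ g : L, B f g = R g - S g) ∧
    ((∀ g : L, B f g = 0) ↔ B f f = 0) ∧
    ((∀ g : L, 0 ≤ g → 0 ≤ B f g) ↔ B (f⁻) (f⁻) = 0) := by
  have hdecomp : ∀ g : L, B f g = B (f⁺) g - B (f⁻) g := by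
    intro g
    conv_lhs => rw [← posPart_sub_negPart f]
    rw [map_sub, LinearMap.sub_apply]
  have hcross : B (f⁺) (f⁻) = 0 := hortho _ _ (posPart_inf_negPart_eq_zero f)
  have hcross' : B (f⁻) (f⁺) = 0 := by rw [hsymm]; exact hcross
  refine ⟨fun hf g hg => hpos f g hf hg, hdecomp, ?_, ?_, ?_⟩
  · exact ⟨B (f⁺), B (f⁻), fun g hg => hpos _ _ (posPart_nonneg f) hg,
      fun g hg => hpos _ _ (negPart_nonneg f) hg, hdecomp⟩
  · constructor
    · intro hall; exact hall f
    · intro hff g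
      have hsplit : B f f = B (f⁺) (f⁺) + B (f⁻) (f⁻) := by
        conv_lhs => rw [← posPart_sub_negPart f]
        simp only [map_sub, LinearMap.sub_apply, hcross, hcross']
        abel
      have hpp : 0 ≤ B (f⁺) (f⁺) := hpos _ _ (posPart_nonneg f) (posPart_nonneg f)
      have hnn : 0 ≤ B (f⁻) (f⁻) := hpos _ _ (negPart_nonneg f) (negPart_nonneg f)
      have hpp0 : B (f⁺) (f⁺) = 0 := by
        have : B (f⁺) (f⁺) ≤ 0 := by
          calc B (f⁺) (f⁺) ≤ B (f⁺) (f⁺) + B (f⁻) (f⁻) := le_add_of_nonneg_right hnn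
            _ = 0 := by rw [← hsplit, hff]
        exact le_antisymm this hpp
      have hnn0 : B (f⁻) (f⁻) = 0 := by
        have : B (f⁻) (f⁻) ≤ 0 := by
          calc B (f⁻) (f⁻) ≤ B (f⁺) (f⁺) + B (f⁻) (f⁻) := le_add_of_nonneg_left hpp
            _ = 0 := by rw [← hsplit, hff]
        exact le_antisymm this hnn
      rw [hdecomp g,
        key_zero' B hpos hortho hsymm hV _ (posPart_nonneg f) hpp0 g,
        key_zero' B hpos hortho hsymm hV _ (negPart_nonneg f) hnn0 g, sub_zero]
  · constructor
    · intro hall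
      have h1 : 0 ≤ B f (f⁻) := hall _ (negPart_nonneg f)
      have h2 : B f (f⁻) = - B (f⁻) (f⁻) := by
        rw [hdecomp, hcross, zero_sub]
      have hge : 0 ≤ B (f⁻) (f⁻) := hpos _ _ (negPart_nonneg f) (negPart_nonneg f)
      rw [h2] at h1
      exact le_antisymm (neg_nonneg.mp h1) hge
    · intro hnn0 g hg
      rw [hdecomp g, key_zero' B hpos hortho hsymm hV _ (negPart_nonneg f) hnn0 g, sub_zero]
      exact hpos _ _ (posPart_nonneg f) hg
end

section
/- Let L be a definite orthosymmetric space over an Archimedean vector lattice V. Then the map Φ : L → L_r(L,V), Φ(f) = Φ_f where Φ_f(g) = ⟨f,g⟩, is an injective positive linear map which is a lattice homomorphism onto its image: Φ_{f∨g} is the supremum of Φ_f and Φ_g within the image {Φ_h : h ∈ L}. -/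
section Helpers

variable {L : Type*} [AddCommGroup L] [Lattice L]
  [CovariantClass L L (· + ·) (· ≤ ·)]

lemma myAddInf (a b c : L) : a + b ⊓ c = (a + b) ⊓ (a + c) := by
  simpa only [OrderIso.addLeft_apply] using (OrderIso.addLeft a).map_inf b c

lemma myDisjAdd {a b c : L} (ha : 0 ≤ a) (hb : 0 ≤ b) (hc : 0 ≤ c)
    (h1 : a ⊓ c = 0) (h2 : b ⊓ c = 0) : (a + b) ⊓ c = 0 := by
  refine le_antisymm ?_ (le_inf (add_nonneg ha hb) hc)
  have key : (a + b) ⊓ c ≤ (a ⊓ c) + (b ⊓ c) := by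
    have e : (a ⊓ c) + (b ⊓ c) = ((a + b) ⊓ (c + b)) ⊓ ((a + c) ⊓ (c + c)) := by
      rw [myAddInf (a ⊓ c) b c, add_comm (a ⊓ c) b, myAddInf b a c,
        add_comm (a ⊓ c) c, myAddInf c a c, add_comm b a, add_comm b c, add_comm c a]
    rw [e]
    refine le_inf (le_inf inf_le_left ?_) (le_inf ?_ ?_)
    · exact inf_le_right.trans (le_add_of_nonneg_right hb)
    · exact inf_le_right.trans (le_add_of_nonneg_left ha)
    · exact inf_le_right.trans (le_add_of_nonneg_right hc)
  calc (a + b) ⊓ c ≤ (a ⊓ c) + (b ⊓ c) := key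
    _ = 0 := by rw [h1, h2, add_zero]

lemma myDisjNsmul {c d : L} (hc : 0 ≤ c) (hd : 0 ≤ d) (hcd : c ⊓ d = 0) :
    ∀ n : ℕ, (n • c) ⊓ d = 0
  | 0 => by rw [zero_smul]; exact inf_eq_left.mpr hd
  | (n + 1) => by
      rw [succ_nsmul]
      exact myDisjAdd (nsmul_nonneg hc n) hc hd (myDisjNsmul hc hd hcd n) hcd

lemma mySubInf (a b c : L) : (a - b) ⊓ (a - c) = a - b ⊔ c := by
  rw [sub_eq_add_neg a b, sub_eq_add_neg a c, ← myAddInf, ← neg_sup, ← sub_eq_add_neg]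

end Helpers

section Key

variable {L V : Type*}
    [AddCommGroup L] [Lattice L] [Module ℝ L]
    [CovariantClass L L (· + ·) (· ≤ ·)]
    [AddCommGroup V] [Lattice V] [Module ℝ V]
    [CovariantClass V V (· + ·) (· ≤ ·)]

lemma myKey (B : L →ₗ[ℝ] L →ₗ[ℝ] V)
    (hpos : ∀ f g : L, 0 ≤ f → 0 ≤ g → 0 ≤ B f g)
    (hortho : ∀ f g : L, f ⊓ g = 0 → B f g = 0)
    (hsymm : ∀ f g : L, B f g = B g f)
    (hV : ∀ u v : V, (∀ n : ℕ, n • u ≤ v) → u ≤ 0)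
    (a b : L) (ha : ∀ x : L, 0 ≤ x → 0 ≤ B a x)
    (hb : ∀ x : L, 0 ≤ x → 0 ≤ B b x)
    (x : L) (hx : 0 ≤ x) : 0 ≤ B (a ⊓ b) x := by
  set u : L := a ⊓ b with hu
  set c : L := a - u with hcdef
  set d : L := b - u with hddef
  have hc : 0 ≤ c := sub_nonneg.2 inf_le_left
  have hd : 0 ≤ d := sub_nonneg.2 inf_le_right
  have hcd : c ⊓ d = 0 := by
    rw [hcdef, hddef, hu]
    rw [show a - a ⊓ b = -(a ⊓ b) + a by abel, show b - a ⊓ b = -(a ⊓ b) + b by abel,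
      ← myAddInf]
    abel
  have main : ∀ n : ℕ, n • (-(B u x)) ≤ B x x := by
    intro n
    set y : L := x ⊓ (n • c) with hydef
    set z : L := x - y with hzdef
    have hy0 : 0 ≤ y := le_inf hx (nsmul_nonneg hc n)
    have hz0 : 0 ≤ z := sub_nonneg.2 inf_le_left
    have hyd : y ⊓ d = 0 := by
      refine le_antisymm ?_ (le_inf hy0 hd)
      calc y ⊓ d ≤ (n • c) ⊓ d := inf_le_inf_right d inf_le_right
        _ = 0 := myDisjNsmul hc hd hcd n
    -- B u y ≥ 0
    have huy : 0 ≤ B u y := by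
      have e' : B u = B b - B d := by rw [show u = b - d by rw [hddef]; abel, map_sub]
      have e : B u y = B b y - B d y := by rw [e', LinearMap.sub_apply]
      rw [e, hortho d y (by rwa [inf_comm] at hyd), sub_zero]
      exact hb y hy0
    -- -(B u x) ≤ B c z
    have step3 : -(B u x) ≤ B c z := by
      have h1 : -(B c z) ≤ B u z := by
        have e : B u = B a - B c := by rw [show u = a - c by rw [hcdef]; abel, map_sub]
        rw [e, LinearMap.sub_apply]
        simpa using sub_le_sub_right (ha z hz0) (B c z)
      have e2 : B u x = B u y + B u z := by
        rw [show x = y + z by rw [hzdef]; abel, map_add]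
      calc -(B u x) = -(B u y) + -(B u z) := by rw [e2]; abel
        _ ≤ 0 + B c z := add_le_add (neg_nonpos.2 huy) (by
              calc -(B u z) = B c z - B u z + -(B c z) := by abel
                _ ≤ B c z - B u z + B u z := add_le_add_right h1 _
                _ = B c z := by abel)
        _ = B c z := zero_add _
    -- n • B c z ≤ B x x
    have step4 : n • (B c z) ≤ B x x := by
      set p : L := x - n • c with hpdef
      have hzp : z = p⁺ := by
        rw [hzdef, hydef, hpdef]
        have := inf_eq_sub_posPart_sub x (n • c)
        rw [this]; abel
      have hznp : z ⊓ p⁻ = 0 := by rw [hzp]; exact posPart_inf_negPart_eq_zero p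
      have hBzp : 0 ≤ B z p := by
        have e : B z p = B z p⁺ - B z p⁻ := by
          rw [← (B z).map_sub, posPart_sub_negPart]
        rw [e, hortho z p⁻ hznp, sub_zero]
        exact hpos z _ (hzp ▸ hz0) (posPart_nonneg p)
      have h5 : B z (n • c) ≤ B z x := by
        have e : B z (n • c) = B z x - B z p := by
          rw [← (B z).map_sub, hpdef]
          congr 1; abel
        rw [e]
        simpa using sub_le_sub_left hBzp (B z x)
      have h6 : B z x ≤ B x x := by
        have e : B x x - B z x = B y x := by
          rw [← LinearMap.sub_apply, ← map_sub, show x - z = y by rw [hzdef]; abel]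
        have := hpos y x hy0 hx
        rw [← e] at this
        exact sub_nonneg.1 this
      calc n • (B c z) = B z (n • c) := by
            rw [hsymm c z, ← Nat.cast_smul_eq_nsmul ℝ n c, (B z).map_smul,
              Nat.cast_smul_eq_nsmul]
        _ ≤ B z x := h5
        _ ≤ B x x := h6
    calc n • (-(B u x)) ≤ n • (B c z) := nsmul_le_nsmul_right step3 n
      _ ≤ B x x := step4
  have := hV (-(B u x)) (B x x) main
  simpa using neg_nonpos.1 this

end Key

theorem stmt9 {L V : Type*}
    [AddCommGroup L] [Lattice L] [Module ℝ L]
    [CovariantClass L L (· + ·) (· ≤ ·)]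
    [AddCommGroup V] [Lattice V] [Module ℝ V]
    [CovariantClass V V (· + ·) (· ≤ ·)]
    (B : L →ₗ[ℝ] L →ₗ[ℝ] V)
    (hpos : ∀ f g : L, 0 ≤ f → 0 ≤ g → 0 ≤ B f g)
    (hortho : ∀ f g : L, f ⊓ g = 0 → B f g = 0)
    (hsymm : ∀ f g : L, B f g = B g f)
    (hV : ∀ u v : V, (∀ n : ℕ, n • u ≤ v) → u ≤ 0)
    (hdef : ∀ f : L, B f f = 0 → f = 0) :
    Function.Injective (fun f : L => (B f : L →ₗ[ℝ] V)) ∧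
    (∀ f : L, 0 ≤ f → ∀ g : L, 0 ≤ g → 0 ≤ B f g) ∧
    (∀ f g : L,
      (∀ x : L, 0 ≤ x → B f x ≤ B (f ⊔ g) x) ∧
      (∀ x : L, 0 ≤ x → B g x ≤ B (f ⊔ g) x) ∧
      (∀ h : L, (∀ x : L, 0 ≤ x → B f x ≤ B h x) →
        (∀ x : L, 0 ≤ x → B g x ≤ B h x) →
        ∀ x : L, 0 ≤ x → B (f ⊔ g) x ≤ B h x)) := by
  refine ⟨?_, fun f hf g hg => hpos f g hf hg, ?_⟩
  · intro f g hfg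
    simp only at hfg
    have h0 : B (f - g) (f - g) = 0 := by
      have e : B (f - g) = 0 := by rw [map_sub, hfg, sub_self]
      rw [e]; rfl
    have := hdef _ h0
    exact sub_eq_zero.1 this
  · intro f g
    have upper : ∀ (f g : L) (x : L), 0 ≤ x → B f x ≤ B (f ⊔ g) x := by
      intro f g x hx
      have h0 : 0 ≤ B (f ⊔ g - f) x := hpos _ x (sub_nonneg.2 le_sup_left) hx
      rw [map_sub, LinearMap.sub_apply] at h0
      exact sub_nonneg.1 h0
    refine ⟨upper f g, fun x hx => sup_comm f g ▸ upper g f x hx, ?_⟩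
    intro h h1 h2 x hx
    have ha : ∀ x : L, 0 ≤ x → 0 ≤ B (h - f) x := by
      intro x hx; rw [map_sub, LinearMap.sub_apply]
      exact sub_nonneg.2 (h1 x hx)
    have hb : ∀ x : L, 0 ≤ x → 0 ≤ B (h - g) x := by
      intro x hx; rw [map_sub, LinearMap.sub_apply]
      exact sub_nonneg.2 (h2 x hx)
    have := myKey B hpos hortho hsymm hV (h - f) (h - g) ha hb x hx
    rw [mySubInf, map_sub, LinearMap.sub_apply] at this
    exact sub_nonneg.1 this
end

section
/- Let L be an orthosymmetric space over an Archimedean vector lattice V with symmetric product, and let T be an orthomorphism on L. Then ⟨f, Tg⟩ = ⟨Tf, g⟩ for all f,g ∈ L; i.e., every orthomorphism is selfadjoint with respect to the orthosymmetric product. -/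
set_option maxHeartbeats 1000000
open Finset

section helpers
variable {L : Type*} [AddCommGroup L] [Lattice L]
  [CovariantClass L L (· + ·) (· ≤ ·)]

lemma my_sum_nonneg (s : Finset ℕ) (m : ℕ → L) (hm : ∀ j, 0 ≤ m j) :
    0 ≤ ∑ j ∈ s, m j := by
  refine Finset.sum_induction m (fun x => 0 ≤ x) (fun x y hx hy => ?_) le_rfl
    (fun i _ => hm i)
  calc (0:L) = 0 + 0 := by rw [add_zero]
    _ ≤ x + y := add_le_add hx hy

lemma my_sum_le_sum (n : ℕ) (u v : ℕ → L) (h : ∀ j, j < n → u j ≤ v j) :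
    ∑ j ∈ range n, u j ≤ ∑ j ∈ range n, v j := by
  induction n with
  | zero => simp
  | succ n ih =>
    rw [sum_range_succ, sum_range_succ]
    exact add_le_add (ih fun j hj => h j (Nat.lt_succ_of_lt hj)) (h n (Nat.lt_succ_self n))

/-- `x - x ⊓ y = (x - y) ⊔ 0`. -/
lemma my_sub_inf (x y : L) : x - x ⊓ y = (x - y) ⊔ 0 := by
  rw [sub_inf, sub_self, sup_comm]

/-- key truncation identity: `a⁺ - (a - c)⁺ = a⁺ ⊓ c` for `0 ≤ c`. -/
lemma my_trunc (a c : L) (hc : 0 ≤ c) :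
    (a ⊔ 0) - ((a - c) ⊔ 0) = (a ⊔ 0) ⊓ c := by
  have h1 : (a - c) ⊔ 0 = (a ⊔ c) - c := by
    rw [sup_sub, sub_self]
  have h3 : (a ⊔ 0) ⊔ c = a ⊔ c := by
    rw [sup_assoc, sup_eq_right.mpr hc]
  have h2 := inf_add_sup (a ⊔ 0) c
  rw [h3] at h2
  have h4 : (a ⊔ 0) ⊓ c = a ⊔ 0 + c - (a ⊔ c) := by rw [← h2]; abel
  rw [h1, h4]; abel

lemma my_add_inf_le (x y z : L) (hx : 0 ≤ x) (hy : 0 ≤ y) (hz : 0 ≤ z) :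
    (x + y) ⊓ z ≤ x ⊓ z + y ⊓ z := by
  have h : x ⊓ z + y ⊓ z = ((x + y) ⊓ (z + y)) ⊓ ((x + z) ⊓ (z + z)) := by
    rw [add_inf, inf_add, inf_add]
  rw [h]
  refine le_inf (le_inf inf_le_left ?_) (le_inf ?_ ?_)
  · exact le_trans inf_le_right (le_add_of_nonneg_right hy)
  · exact le_trans inf_le_right (le_add_of_nonneg_left hx)
  · exact le_trans inf_le_right (le_add_of_nonneg_left hz)

lemma my_disj (a b : L) (hab : a + b ≤ 0) : (a ⊔ 0) ⊓ (b ⊔ 0) = 0 := by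
  have hanb : a ≤ -b := by
    have := add_le_add_right hab (-b)
    simpa using this
  have h1 : a ⊔ 0 ≤ (-b) ⊔ 0 := sup_le_sup_right hanb 0
  have h2 : ((-b) ⊔ 0) ⊓ (b ⊔ 0) = 0 := by
    have := posPart_inf_negPart_eq_zero b
    rwa [posPart_def, negPart_def, inf_comm] at this
  exact le_antisymm (le_trans (inf_le_inf_right _ h1) h2.le)
    (le_inf le_sup_right le_sup_right)

lemma my_sum_inf_zero (n : ℕ) (m : ℕ → L) (z : L) (hz : 0 ≤ z)
    (hm : ∀ j, 0 ≤ m j) (hd : ∀ j, j < n → m j ⊓ z = 0) :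
    (∑ j ∈ range n, m j) ⊓ z = 0 := by
  induction n with
  | zero => simpa using inf_eq_left.mpr hz
  | succ n ih =>
    rw [sum_range_succ]
    refine le_antisymm ?_ (le_inf (by
      calc (0:L) = 0 + 0 := by rw [add_zero]
        _ ≤ ∑ j ∈ range n, m j + m n := add_le_add (my_sum_nonneg (range n) m hm) (hm n)) hz)
    calc (∑ j ∈ range n, m j + m n) ⊓ z
        ≤ (∑ j ∈ range n, m j) ⊓ z + (m n) ⊓ z :=
          my_add_inf_le _ _ _ (my_sum_nonneg (range n) m hm) (hm n) hz
      _ = 0 := by rw [ih (fun j hj => hd j (Nat.lt_succ_of_lt hj)), hd n (Nat.lt_succ_self n),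
            add_zero]

lemma my_sum_disjoint_le (n : ℕ) (m : ℕ → L) (h : L) (hh : 0 ≤ h)
    (hm0 : ∀ j, 0 ≤ m j) (hmh : ∀ j, m j ≤ h)
    (hd : ∀ j k, j < k → m j ⊓ m k = 0) :
    ∑ j ∈ range n, m j ≤ h := by
  induction n with
  | zero => simpa using hh
  | succ n ih =>
    rw [sum_range_succ]
    have hinf : (∑ j ∈ range n, m j) ⊓ m n = 0 :=
      my_sum_inf_zero n m (m n) (hm0 n) hm0 (fun j hj => hd j n hj)
    have hias := inf_add_sup (∑ j ∈ range n, m j) (m n)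
    rw [hinf, zero_add] at hias
    rw [← hias]
    exact sup_le ih (hmh n)

end helpers

section main
variable {L V : Type*}
    [AddCommGroup L] [Lattice L] [Module ℝ L]
    [CovariantClass L L (· + ·) (· ≤ ·)]
    [AddCommGroup V] [Lattice V] [Module ℝ V]
    [CovariantClass V V (· + ·) (· ≤ ·)]
    (C : L →ₗ[ℝ] L →ₗ[ℝ] V)

lemma Cnl (k : ℕ) (x z : L) : C (k • x) z = k • C x z := by
  induction k with
  | zero => simp
  | succ k ih => rw [succ_nsmul, succ_nsmul, map_add, LinearMap.add_apply, ih]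

lemma Csl (s : Finset ℕ) (u : ℕ → L) (z : L) :
    C (∑ j ∈ s, u j) z = ∑ j ∈ s, C (u j) z := by
  rw [map_sum]
  exact LinearMap.sum_apply _ _ _

lemma aux_bound (hCpos : ∀ x y : L, 0 ≤ x → 0 ≤ y → 0 ≤ C x y)
    (hCortho : ∀ x y : L, x ⊓ y = 0 → C x y = 0)
    (f g : L) (hf : 0 ≤ f) (hg : 0 ≤ g) (n : ℕ) :
    n • (C f (f + g) - C (f + g) f) ≤ C (f + g) (f + g) + C (f + g) (f + g) := by
  set h := f + g with hhdef
  have hh : 0 ≤ h := by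
    calc (0:L) = 0 + 0 := by rw [add_zero]
      _ ≤ f + g := add_le_add hf hg
  have hfh : f ≤ h := le_add_of_nonneg_right hg
  set P : ℕ → L := fun j => (n • f - j • h) ⊔ 0 with hPdef
  set w : ℕ → L := fun j => P j ⊓ h with hwdef
  set y : ℕ → L := fun j => h - w j with hydef
  set m : ℕ → L := fun j => w j ⊓ y j with hmdef
  have hnf0 : 0 ≤ n • f := by simpa using nsmul_le_nsmul_right hf n
  have hP0 : P 0 = n • f := by
    simp only [hPdef]
    rw [zero_nsmul, sub_zero]
    exact sup_eq_left.mpr hnf0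
  have hPn : P n = 0 := by
    simp only [hPdef]
    exact sup_eq_right.mpr (sub_nonpos.mpr (nsmul_le_nsmul_right hfh n))
  have hwP : ∀ j, w j ≤ P j := fun j => inf_le_left
  have hw0 : ∀ j, 0 ≤ w j := fun j => le_inf le_sup_right hh
  have hwh : ∀ j, w j ≤ h := fun j => inf_le_right
  have hy0 : ∀ j, 0 ≤ y j := fun j => sub_nonneg.mpr (hwh j)
  have hyh : ∀ j, y j ≤ h := fun j => sub_le_self h (hw0 j)
  have hywsum : ∀ j, y j = h - w j := fun j => rfl
  have hw_eq : ∀ j, P j - P (j + 1) = w j := by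
    intro j
    have e1 : n • f - (j + 1) • h = (n • f - j • h) - h := by
      rw [succ_nsmul]; abel
    simp only [hPdef, hwdef]
    rw [e1]
    exact my_trunc _ _ hh
  have hsumw : ∑ j ∈ range n, w j = n • f := by
    rw [Finset.sum_congr rfl fun j _ => (hw_eq j).symm, Finset.sum_range_sub' P n,
      hP0, hPn, sub_zero]
  have hsumy : ∑ k ∈ range n, y k = n • g := by
    simp only [hydef]
    rw [Finset.sum_sub_distrib, hsumw, Finset.sum_const, card_range, hhdef, smul_add]
    abel
  have hyP : ∀ k, y k = (h - P k) ⊔ 0 := by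
    intro k
    simp only [hydef, hwdef]
    rw [sub_inf, sub_self]
  have hyB : ∀ k, y k ≤ ((k + 1) • h - n • f) ⊔ 0 := by
    intro k
    rw [hyP k]
    refine sup_le_sup_right ?_ 0
    calc h - P k ≤ h - (n • f - k • h) := sub_le_sub_left le_sup_left h
      _ = (k + 1) • h - n • f := by rw [succ_nsmul]; abel
  have hdisj : ∀ j k, k < j → w j ⊓ y k = 0 := by
    intro j k hkj
    have hsmul : (k + 1) • h ≤ j • h := nsmul_le_nsmul_left hh hkj
    have hsum0 : (n • f - j • h) + ((k + 1) • h - n • f) ≤ 0 := by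
      calc (n • f - j • h) + ((k + 1) • h - n • f) = (k + 1) • h - j • h := by abel
        _ ≤ 0 := sub_nonpos.mpr hsmul
    refine le_antisymm ?_ (le_inf (hw0 j) (hy0 k))
    calc w j ⊓ y k ≤ P j ⊓ (((k + 1) • h - n • f) ⊔ 0) := inf_le_inf (hwP j) (hyB k)
      _ = 0 := my_disj _ _ hsum0
  set D : ℕ → V := fun j => C (w j) h - C h (w j) with hDdef
  set E : ℕ → ℕ → V := fun j k => C (w j) (y k) - C (y k) (w j) with hEdef
  have key : ∀ j k, k < j →
      C (w j) (w k) = C (w j) h ∧ C (w k) (w j) = C h (w j) := by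
    intro j k hkj
    have hd := hdisj j k hkj
    have h1 : C (w j) (y k) = 0 := hCortho _ _ hd
    have h2 : C (y k) (w j) = 0 := hCortho _ _ (by rw [inf_comm]; exact hd)
    constructor
    · rw [hywsum k, map_sub] at h1
      exact (sub_eq_zero.mp h1).symm
    · rw [hywsum k, map_sub, LinearMap.sub_apply] at h2
      exact (sub_eq_zero.mp h2).symm
  have hsumD : ∑ j ∈ range n, D j = n • (C f h - C h f) := by
    simp only [hDdef]
    rw [Finset.sum_sub_distrib, ← Csl C (range n) w h, ← map_sum, hsumw, Cnl, map_nsmul,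
      smul_sub]
  have heq : C f g - C g f = C f h - C h f := by
    have e1 : C f h = C f f + C f g := by rw [hhdef, map_add]
    have e2 : C h f = C f f + C g f := by rw [hhdef, map_add, LinearMap.add_apply]
    rw [e1, e2]; abel
  have hEtot : ∑ j ∈ range n, ∑ k ∈ range n, E j k = n • (n • (C f h - C h f)) := by
    calc ∑ j ∈ range n, ∑ k ∈ range n, E j k
        = ∑ j ∈ range n, (n • (C (w j) g - C g (w j))) := by
          refine Finset.sum_congr rfl fun j _ => ?_
          simp only [hEdef]
          rw [Finset.sum_sub_distrib, ← map_sum, ← Csl C (range n) y (w j), hsumy,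
            map_nsmul, Cnl, smul_sub]
      _ = n • (C (n • f) g - C g (n • f)) := by
          rw [← Finset.smul_sum, Finset.sum_sub_distrib, ← Csl C (range n) w g, ← map_sum,
            hsumw]
      _ = n • (n • (C f h - C h f)) := by rw [Cnl, map_nsmul, ← smul_sub, heq]
  set G : ℕ → ℕ → V := fun j k => E j k + E k j - D j - D k with hGdef
  have hGsymm : ∀ j k, G j k = G k j := by
    intro j k; simp only [hGdef]; abel
  have hGlt : ∀ j k, k < j → G j k = 0 := by
    intro j k hkj
    have hEjk : E j k = 0 := by
      simp only [hEdef]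
      rw [hCortho _ _ (hdisj j k hkj), hCortho _ _ (by rw [inf_comm]; exact hdisj j k hkj),
        sub_zero]
    have hkey := key j k hkj
    have hEkj : E k j = D k + D j := by
      simp only [hEdef, hDdef]
      rw [hywsum j, map_sub, map_sub, LinearMap.sub_apply, hkey.1, hkey.2]
      abel
    simp only [hGdef]
    rw [hEjk, hEkj]; abel
  have hGne : ∀ j k, j ≠ k → G j k = 0 := by
    intro j k hne
    rcases lt_or_gt_of_ne hne with hlt | hgt
    · rw [hGsymm]; exact hGlt k j hlt
    · exact hGlt j k hgt
  have hGdiagsum : ∑ j ∈ range n, ∑ k ∈ range n, G j k = ∑ j ∈ range n, G j j := by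
    refine Finset.sum_congr rfl fun j hj => ?_
    exact Finset.sum_eq_single_of_mem j hj (fun k _ hk => hGne j k (Ne.symm hk))
  have hGtot : ∑ j ∈ range n, ∑ k ∈ range n, G j k = 0 := by
    have h1 : ∑ j ∈ range n, ∑ k ∈ range n, G j k
        = (∑ j ∈ range n, ∑ k ∈ range n, E j k) + (∑ j ∈ range n, ∑ k ∈ range n, E k j)
          - (∑ j ∈ range n, ∑ k ∈ range n, D j) - (∑ j ∈ range n, ∑ k ∈ range n, D k) := by
      simp only [hGdef, Finset.sum_sub_distrib, Finset.sum_add_distrib]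
    have h2 : ∑ j ∈ range n, ∑ k ∈ range n, E k j
        = ∑ j ∈ range n, ∑ k ∈ range n, E j k := Finset.sum_comm
    have h3 : ∑ j ∈ range n, ∑ k ∈ range n, (D j) = n • (n • (C f h - C h f)) := by
      rw [Finset.sum_congr rfl fun j (_ : j ∈ range n) =>
        (Finset.sum_const (D j)).trans (by rw [card_range])]
      rw [← Finset.smul_sum, hsumD]
    have h4 : ∑ j ∈ range n, ∑ k ∈ range n, D k = n • (n • (C f h - C h f)) := by
      rw [Finset.sum_const, card_range, hsumD]
    rw [h1, h2, hEtot, h3, h4]; abel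
  have hdiag0 : ∑ j ∈ range n, G j j = 0 := by rw [← hGdiagsum, hGtot]
  have hsplit : ∑ j ∈ range n, G j j
      = (∑ j ∈ range n, E j j) + (∑ j ∈ range n, E j j)
        - (∑ j ∈ range n, D j) - (∑ j ∈ range n, D j) := by
    simp only [hGdef, Finset.sum_sub_distrib, Finset.sum_add_distrib]
  have hX : ∑ j ∈ range n, E j j = ∑ j ∈ range n, D j := by
    have h2X : ((∑ j ∈ range n, E j j) - ∑ j ∈ range n, D j)
        + ((∑ j ∈ range n, E j j) - ∑ j ∈ range n, D j) = 0 := by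
      rw [hsplit] at hdiag0
      calc ((∑ j ∈ range n, E j j) - ∑ j ∈ range n, D j)
          + ((∑ j ∈ range n, E j j) - ∑ j ∈ range n, D j)
          = (∑ j ∈ range n, E j j) + (∑ j ∈ range n, E j j)
            - (∑ j ∈ range n, D j) - (∑ j ∈ range n, D j) := by abel
        _ = 0 := hdiag0
    have h2X' : (2:ℝ) • ((∑ j ∈ range n, E j j) - ∑ j ∈ range n, D j) = 0 := by
      rw [two_smul]; exact h2X
    have hX0 : (∑ j ∈ range n, E j j) - ∑ j ∈ range n, D j = 0 := by
      have := congrArg (fun z => (2:ℝ)⁻¹ • z) h2X'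
      simpa [smul_smul] using this
    exact sub_eq_zero.mp hX0
  -- the bound on the diagonal
  set a : ℕ → L := fun j => w j - m j with hadef
  set b : ℕ → L := fun j => y j - m j with hbdef
  have hm0 : ∀ j, 0 ≤ m j := fun j => le_inf (hw0 j) (hy0 j)
  have hmw : ∀ j, m j ≤ w j := fun j => inf_le_left
  have hmy : ∀ j, m j ≤ y j := fun j => inf_le_right
  have hmh : ∀ j, m j ≤ h := fun j => le_trans (hmw j) (hwh j)
  have ha0 : ∀ j, 0 ≤ a j := fun j => sub_nonneg.mpr (hmw j)
  have hb0 : ∀ j, 0 ≤ b j := fun j => sub_nonneg.mpr (hmy j)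
  have hah : ∀ j, a j ≤ h := fun j => le_trans (sub_le_self (w j) (hm0 j)) (hwh j)
  have hbh : ∀ j, b j ≤ h := fun j => le_trans (sub_le_self (y j) (hm0 j)) (hyh j)
  have haw : ∀ j, w j = m j + a j := by intro j; simp only [hadef]; abel
  have hby : ∀ j, y j = m j + b j := by intro j; simp only [hbdef]; abel
  have hab : ∀ j, a j ⊓ b j = 0 := by
    intro j
    have ha' : a j = (w j - y j) ⊔ 0 := by
      simp only [hadef, hmdef]; exact my_sub_inf (w j) (y j)
    have hb' : b j = (y j - w j) ⊔ 0 := by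
      simp only [hbdef, hmdef]; rw [inf_comm]; exact my_sub_inf (y j) (w j)
    rw [ha', hb']
    refine my_disj _ _ ?_
    have : (w j - y j) + (y j - w j) = 0 := by abel
    rw [this]
  have hEjj_le : ∀ j, E j j ≤ C h (m j) + C (m j) h := by
    intro j
    have hexp : E j j = C (m j) (b j) + C (a j) (m j) - C (m j) (a j) - C (b j) (m j) := by
      simp only [hEdef]
      rw [haw j, hby j]
      simp only [map_add, LinearMap.add_apply]
      rw [hCortho (a j) (b j) (hab j), hCortho (b j) (a j) (by rw [inf_comm]; exact hab j)]
      abel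
    have h1 : 0 ≤ C (m j) (a j) := hCpos _ _ (hm0 j) (ha0 j)
    have h2 : 0 ≤ C (b j) (m j) := hCpos _ _ (hb0 j) (hm0 j)
    have h5 : C (m j) (b j) ≤ C (m j) h := by
      have : 0 ≤ C (m j) h - C (m j) (b j) := by
        rw [← map_sub]
        exact hCpos _ _ (hm0 j) (sub_nonneg.mpr (hbh j))
      exact sub_nonneg.mp this
    have h6 : C (a j) (m j) ≤ C h (m j) := by
      have : 0 ≤ C h (m j) - C (a j) (m j) := by
        rw [← LinearMap.sub_apply, ← map_sub]
        exact hCpos _ _ (sub_nonneg.mpr (hah j)) (hm0 j)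
      exact sub_nonneg.mp this
    calc E j j = C (m j) (b j) + C (a j) (m j) - (C (m j) (a j) + C (b j) (m j)) := by
          rw [hexp]; abel
      _ ≤ C (m j) (b j) + C (a j) (m j) := sub_le_self _ (by
          calc (0:V) = 0 + 0 := by rw [add_zero]
            _ ≤ C (m j) (a j) + C (b j) (m j) := add_le_add h1 h2)
      _ ≤ C (m j) h + C h (m j) := add_le_add h5 h6
      _ = C h (m j) + C (m j) h := by abel
  have hdisjm : ∀ j k, j < k → m j ⊓ m k = 0 := by
    intro j k hjk
    refine le_antisymm ?_ (le_inf (hm0 j) (hm0 k))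
    calc m j ⊓ m k ≤ y j ⊓ w k := inf_le_inf (hmy j) (hmw k)
      _ = w k ⊓ y j := inf_comm _ _
      _ = 0 := hdisj k j hjk
  have hM0 : 0 ≤ ∑ j ∈ range n, m j := my_sum_nonneg _ _ hm0
  have hMh : (∑ j ∈ range n, m j) ≤ h := my_sum_disjoint_le n m h hh hm0 hmh hdisjm
  have hbound : ∑ j ∈ range n, E j j ≤ C h h + C h h := by
    calc ∑ j ∈ range n, E j j ≤ ∑ j ∈ range n, (C h (m j) + C (m j) h) :=
          my_sum_le_sum n _ _ fun j _ => hEjj_le j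
      _ = C h (∑ j ∈ range n, m j) + C (∑ j ∈ range n, m j) h := by
          rw [Finset.sum_add_distrib, ← map_sum, ← Csl C (range n) m h]
      _ ≤ C h h + C h h := by
          refine add_le_add ?_ ?_
          · have : 0 ≤ C h h - C h (∑ j ∈ range n, m j) := by
              rw [← map_sub]
              exact hCpos _ _ hh (sub_nonneg.mpr hMh)
            exact sub_nonneg.mp this
          · have : 0 ≤ C h h - C (∑ j ∈ range n, m j) h := by
              rw [← LinearMap.sub_apply, ← map_sub]
              exact hCpos _ _ (sub_nonneg.mpr hMh) hh
            exact sub_nonneg.mp this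
  calc n • (C f h - C h f) = ∑ j ∈ range n, D j := hsumD.symm
    _ = ∑ j ∈ range n, E j j := hX.symm
    _ ≤ C h h + C h h := hbound

end main


section main2
variable {L V : Type*}
    [AddCommGroup L] [Lattice L] [Module ℝ L]
    [CovariantClass L L (· + ·) (· ≤ ·)]
    [AddCommGroup V] [Lattice V] [Module ℝ V]
    [CovariantClass V V (· + ·) (· ≤ ·)]
    (C : L →ₗ[ℝ] L →ₗ[ℝ] V)

lemma my_possymm (hV : ∀ u v : V, (∀ n : ℕ, n • u ≤ v) → u ≤ 0)
    (hCpos : ∀ x y : L, 0 ≤ x → 0 ≤ y → 0 ≤ C x y)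
    (hCortho : ∀ x y : L, x ⊓ y = 0 → C x y = 0)
    (f g : L) (hf : 0 ≤ f) (hg : 0 ≤ g) : C f g = C g f := by
  have haux : ∀ p q : L, 0 ≤ p → 0 ≤ q → C p (p + q) - C (p + q) p ≤ 0 := by
    intro p q hp hq
    exact hV _ (C (p + q) (p + q) + C (p + q) (p + q))
      (fun n => aux_bound C hCpos hCortho p q hp hq n)
  have h1 := haux f g hf hg
  have h2 := haux g f hg hf
  rw [add_comm g f] at h2
  have e1 : C (f + g) (f + g) = C f (f + g) + C g (f + g) := by
    rw [show C (f + g) = C f + C g from map_add C f g]; rfl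
  have e2 : C (f + g) (f + g) = C (f + g) f + C (f + g) g := map_add (C (f + g)) f g
  have h3 : C g (f + g) - C (f + g) g + (C f (f + g) - C (f + g) f) = 0 := by
    calc C g (f + g) - C (f + g) g + (C f (f + g) - C (f + g) f)
        = (C f (f + g) + C g (f + g)) - (C (f + g) f + C (f + g) g) := by abel
      _ = 0 := by rw [← e1, ← e2, sub_self]
  have h4 : C f (f + g) - C (f + g) f = 0 := by
    refine le_antisymm h1 ?_
    have h5 : C g (f + g) - C (f + g) g = -(C f (f + g) - C (f + g) f) :=
      eq_neg_of_add_eq_zero_left h3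
    rw [h5] at h2
    exact neg_nonpos.mp h2
  have e5 : C f (f + g) = C f f + C f g := map_add (C f) f g
  have e6 : C (f + g) f = C f f + C g f := by
    rw [show C (f + g) = C f + C g from map_add C f g]; rfl
  have : C f g - C g f = 0 := by
    calc C f g - C g f = (C f f + C f g) - (C f f + C g f) := by abel
      _ = 0 := by rw [← e5, ← e6, h4]
  exact sub_eq_zero.mp this

lemma my_symm (hV : ∀ u v : V, (∀ n : ℕ, n • u ≤ v) → u ≤ 0)
    (hCpos : ∀ x y : L, 0 ≤ x → 0 ≤ y → 0 ≤ C x y)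
    (hCortho : ∀ x y : L, x ⊓ y = 0 → C x y = 0)
    (f g : L) : C f g = C g f := by
  have base : ∀ x y : L, 0 ≤ x → 0 ≤ y → C x y = C y x :=
    fun x y hx hy => my_possymm C hV hCpos hCortho x y hx hy
  have hf : f = posPart f - negPart f := (posPart_sub_negPart f).symm
  have hg : g = posPart g - negPart g := (posPart_sub_negPart g).symm
  rw [hf, hg]
  simp only [map_sub, LinearMap.sub_apply]
  rw [base (posPart f) (posPart g) (posPart_nonneg f) (posPart_nonneg g),
    base (posPart f) (negPart g) (posPart_nonneg f) (negPart_nonneg g),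
    base (negPart f) (posPart g) (negPart_nonneg f) (posPart_nonneg g),
    base (negPart f) (negPart g) (negPart_nonneg f) (negPart_nonneg g)]
  abel

end main2

theorem stmt12 {L V : Type*}
    [AddCommGroup L] [Lattice L] [Module ℝ L]
    [CovariantClass L L (· + ·) (· ≤ ·)]
    [AddCommGroup V] [Lattice V] [Module ℝ V]
    [CovariantClass V V (· + ·) (· ≤ ·)]
    (B : L →ₗ[ℝ] L →ₗ[ℝ] V)
    (hpos : ∀ f g : L, 0 ≤ f → 0 ≤ g → 0 ≤ B f g)
    (hortho : ∀ f g : L, f ⊓ g = 0 → B f g = 0)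
    (hsymm : ∀ f g : L, B f g = B g f)
    (hV : ∀ u v : V, (∀ n : ℕ, n • u ≤ v) → u ≤ 0)
    (R S : L →ₗ[ℝ] L)
    (hR : ∀ f : L, 0 ≤ f → 0 ≤ R f) (hS : ∀ f : L, 0 ≤ f → 0 ≤ S f)
    (hRorth : ∀ f g : L, f ⊓ g = 0 → f ⊓ R g = 0)
    (hSorth : ∀ f g : L, f ⊓ g = 0 → f ⊓ S g = 0)
    (T : L →ₗ[ℝ] L) (hT : T = R - S)
    (f g : L) : B f (T g) = B (T f) g := by
  have hCR : ∀ x y : L, (B.compl₂ R) x y = B x (R y) := fun x y => rfl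
  have hCS : ∀ x y : L, (B.compl₂ S) x y = B x (S y) := fun x y => rfl
  have hRsymm : ∀ x y : L, B x (R y) = B y (R x) := by
    intro x y
    have := my_symm (B.compl₂ R) hV
      (fun a b ha hb => by rw [hCR]; exact hpos a (R b) ha (hR b hb))
      (fun a b hab => by rw [hCR]; exact hortho a (R b) (hRorth a b hab)) x y
    rwa [hCR, hCR] at this
  have hSsymm : ∀ x y : L, B x (S y) = B y (S x) := by
    intro x y
    have := my_symm (B.compl₂ S) hV
      (fun a b ha hb => by rw [hCS]; exact hpos a (S b) ha (hS b hb))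
      (fun a b hab => by rw [hCS]; exact hortho a (S b) (hSorth a b hab)) x y
    rwa [hCS, hCS] at this
  have hTg : T g = R g - S g := by rw [hT]; rfl
  have hTf : T f = R f - S f := by rw [hT]; rfl
  calc B f (T g) = B f (R g) - B f (S g) := by rw [hTg, map_sub]
    _ = B g (R f) - B g (S f) := by rw [hRsymm f g, hSsymm f g]
    _ = B (R f) g - B (S f) g := by rw [hsymm g (R f), hsymm g (S f)]
    _ = B (T f) g := by rw [hTf, map_sub, LinearMap.sub_apply]
end

section
/- Let L, M be orthosymmetric spaces over an Archimedean vector lattice V, with M definite, and let T : L → M be a positive linear operator admitting an adjoint T* : M → L (i.e., ⟨Tf,g⟩ = ⟨f,T*g⟩ for all f ∈ L, g ∈ M). Then T* is positive. -/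
theorem stmt15 {L M V : Type*}
    [AddCommGroup L] [Lattice L] [Module ℝ L]
    [CovariantClass L L (· + ·) (· ≤ ·)]
    [AddCommGroup M] [Lattice M] [Module ℝ M]
    [CovariantClass M M (· + ·) (· ≤ ·)]
    [AddCommGroup V] [Lattice V] [Module ℝ V]
    [CovariantClass V V (· + ·) (· ≤ ·)]
    (BL : L →ₗ[ℝ] L →ₗ[ℝ] V)
    (hLpos : ∀ f g : L, 0 ≤ f → 0 ≤ g → 0 ≤ BL f g)
    (hLortho : ∀ f g : L, f ⊓ g = 0 → BL f g = 0)
    (hLsymm : ∀ f g : L, BL f g = BL g f)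
    (BM : M →ₗ[ℝ] M →ₗ[ℝ] V)
    (hMpos : ∀ f g : M, 0 ≤ f → 0 ≤ g → 0 ≤ BM f g)
    (hMortho : ∀ f g : M, f ⊓ g = 0 → BM f g = 0)
    (hMsymm : ∀ f g : M, BM f g = BM g f)
    (hV : ∀ u v : V, (∀ n : ℕ, n • u ≤ v) → u ≤ 0)
    (hLdef : ∀ f : L, BL f f = 0 → f = 0)
    (hMdef : ∀ g : M, BM g g = 0 → g = 0)
    (T : L →ₗ[ℝ] M) (hTpos : ∀ f : L, 0 ≤ f → 0 ≤ T f)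
    (S : M →ₗ[ℝ] L)
    (hadj : ∀ (f : L) (g : M), BM (T f) g = BL f (S g)) :
    ∀ g : M, 0 ≤ g → 0 ≤ S g := by
  intro g hg
  rw [← negPart_eq_zero]
  apply hLdef
  have hp : (0:L) ≤ (S g)⁻ := negPart_nonneg _
  have h1 : BL (S g)⁻ (S g)⁺ = 0 := by
    apply hLortho
    rw [inf_comm]
    exact posPart_inf_negPart_eq_zero (S g)
  have h2 : BL (S g)⁻ (S g) = - BL (S g)⁻ (S g)⁻ := by
    have : BL (S g)⁻ (S g) = BL (S g)⁻ ((S g)⁺ - (S g)⁻) := by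
      rw [posPart_sub_negPart]
    rw [this, map_sub, h1, zero_sub]
  have h3 : (0:V) ≤ BL (S g)⁻ (S g) := by
    rw [← hadj]
    exact hMpos _ _ (hTpos _ hp) hg
  have h4 : (0:V) ≤ BL (S g)⁻ (S g)⁻ := hLpos _ _ hp hp
  have h5 : BL (S g)⁻ (S g)⁻ ≤ 0 := by
    rw [← neg_nonneg, ← h2]; exact h3
  exact le_antisymm h5 h4
end

section
/- Let L, M be orthosymmetric spaces over an Archimedean vector lattice V with L and M definite, and let T : L → M be positive with adjoint T* : M → L. Then T is a lattice homomorphism if and only if T*T is an orthomorphism on L. More precisely: if T preserves disjointness (f ∧ g = 0 ⟹ Tf ∧ Tg = 0) then (T*T)f ∧ g = 0 whenever f ∧ g = 0; conversely if T*T is a positive orthomorphism then f ∧ g = 0 implies Tf ∧ Tg = 0. -/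
private lemma key16 {L V : Type*}
    [AddCommGroup L] [Lattice L] [Module ℝ L]
    [CovariantClass L L (· + ·) (· ≤ ·)]
    [AddCommGroup V] [Lattice V] [Module ℝ V]
    [CovariantClass V V (· + ·) (· ≤ ·)]
    (B : L →ₗ[ℝ] L →ₗ[ℝ] V)
    (hpos : ∀ f g : L, 0 ≤ f → 0 ≤ g → 0 ≤ B f g)
    (hdef : ∀ f : L, B f f = 0 → f = 0)
    (u v : L) (hu : 0 ≤ u) (hv : 0 ≤ v) (h : B u v = 0) : u ⊓ v = 0 := by
  set w := u ⊓ v with hw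
  have hw0 : 0 ≤ w := le_inf hu hv
  have h1 : 0 ≤ B (u - w) v := hpos _ _ (sub_nonneg.2 inf_le_left) hv
  have h2 : 0 ≤ B w (v - w) := hpos _ _ hw0 (sub_nonneg.2 inf_le_right)
  have h3 : 0 ≤ B w w := hpos _ _ hw0 hw0
  have heq : B (u - w) v + (B w (v - w) + B w w) = B u v := by
    simp only [map_sub, LinearMap.sub_apply]
    abel
  have hle : B w w ≤ 0 := by
    calc B w w ≤ B w (v - w) + B w w := le_add_of_nonneg_left h2
    _ ≤ B (u - w) v + (B w (v - w) + B w w) := le_add_of_nonneg_left h1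
    _ = 0 := by rw [heq, h]
  exact hdef _ (le_antisymm hle h3)

theorem stmt16 {L M V : Type*}
    [AddCommGroup L] [Lattice L] [Module ℝ L]
    [CovariantClass L L (· + ·) (· ≤ ·)]
    [AddCommGroup M] [Lattice M] [Module ℝ M]
    [CovariantClass M M (· + ·) (· ≤ ·)]
    [AddCommGroup V] [Lattice V] [Module ℝ V]
    [CovariantClass V V (· + ·) (· ≤ ·)]
    (BL : L →ₗ[ℝ] L →ₗ[ℝ] V)
    (hLpos : ∀ f g : L, 0 ≤ f → 0 ≤ g → 0 ≤ BL f g)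
    (hLortho : ∀ f g : L, f ⊓ g = 0 → BL f g = 0)
    (hLsymm : ∀ f g : L, BL f g = BL g f)
    (BM : M →ₗ[ℝ] M →ₗ[ℝ] V)
    (hMpos : ∀ f g : M, 0 ≤ f → 0 ≤ g → 0 ≤ BM f g)
    (hMortho : ∀ f g : M, f ⊓ g = 0 → BM f g = 0)
    (hMsymm : ∀ f g : M, BM f g = BM g f)
    (hV : ∀ u v : V, (∀ n : ℕ, n • u ≤ v) → u ≤ 0)
    (hLdef : ∀ f : L, BL f f = 0 → f = 0)
    (hMdef : ∀ g : M, BM g g = 0 → g = 0)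
    (T : L →ₗ[ℝ] M) (hTpos : ∀ f : L, 0 ≤ f → 0 ≤ T f)
    (S : M →ₗ[ℝ] L)
    (hadj : ∀ (f : L) (g : M), BM (T f) g = BL f (S g)) :
    (∀ f g : L, f ⊓ g = 0 → T f ⊓ T g = 0) ↔
      (∀ f g : L, f ⊓ g = 0 → (S (T f)) ⊓ g = 0) := by
  constructor
  · intro hT f g hfg
    have hf : 0 ≤ f := hfg ▸ inf_le_left
    have hg : 0 ≤ g := hfg ▸ inf_le_right
    -- S (T f) is nonneg
    have hSTpos : 0 ≤ S (T f) := by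
      set p := (S (T f))⁻ with hp
      have hp0 : 0 ≤ p := negPart_nonneg _
      have e1 : BL p (S (T f)) = BM (T p) (T f) := (hadj p (T f)).symm
      have e2 : 0 ≤ BM (T p) (T f) := hMpos _ _ (hTpos _ hp0) (hTpos _ hf)
      have e3 : BL p ((S (T f))⁺) = 0 :=
        hLortho _ _ (by rw [inf_comm]; exact posPart_inf_negPart_eq_zero _)
      have e4 : BL p (S (T f)) = BL p ((S (T f))⁺) - BL p p := by
        conv_lhs => rw [← posPart_sub_negPart (S (T f))]
        exact map_sub _ _ _
      have hle : BL p p ≤ 0 := by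
        have h' : 0 ≤ - BL p p := by rw [← e1] at e2; rw [e4, e3] at e2; simpa using e2
        exact neg_nonneg.mp h'
      have : BL p p = 0 := le_antisymm hle (hLpos _ _ hp0 hp0)
      have hpz : p = 0 := hLdef _ this
      exact negPart_eq_zero.mp hpz
    have hBz : BL (S (T f)) g = 0 := by
      rw [hLsymm, ← hadj, hMsymm]
      exact hMortho _ _ (hT f g hfg)
    exact key16 BL hLpos hLdef _ _ hSTpos hg hBz
  · intro hST f g hfg
    have hf : 0 ≤ f := hfg ▸ inf_le_left
    have hg : 0 ≤ g := hfg ▸ inf_le_right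
    have hBz : BM (T f) (T g) = 0 := by
      rw [hadj, hLsymm]
      exact hLortho _ _ (hST g f (by rwa [inf_comm]))
    exact key16 BM hMpos hMdef _ _ (hTpos _ hf) (hTpos _ hg) hBz
end

section
/- Let L, M be orthosymmetric spaces over an Archimedean vector lattice V with L, M definite, and let T : L → M be a surjective lattice homomorphism admitting an adjoint T* : M → L. Then T* is a lattice homomorphism: T*|g| = |T*g| for all g ∈ M. -/
theorem stmt17 {L M V : Type*}
    [AddCommGroup L] [Lattice L] [Module ℝ L]
    [CovariantClass L L (· + ·) (· ≤ ·)]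
    [AddCommGroup M] [Lattice M] [Module ℝ M]
    [CovariantClass M M (· + ·) (· ≤ ·)]
    [AddCommGroup V] [Lattice V] [Module ℝ V]
    [CovariantClass V V (· + ·) (· ≤ ·)]
    (BL : L →ₗ[ℝ] L →ₗ[ℝ] V)
    (hLpos : ∀ f g : L, 0 ≤ f → 0 ≤ g → 0 ≤ BL f g)
    (hLortho : ∀ f g : L, f ⊓ g = 0 → BL f g = 0)
    (hLsymm : ∀ f g : L, BL f g = BL g f)
    (BM : M →ₗ[ℝ] M →ₗ[ℝ] V)
    (hMpos : ∀ f g : M, 0 ≤ f → 0 ≤ g → 0 ≤ BM f g)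
    (hMortho : ∀ f g : M, f ⊓ g = 0 → BM f g = 0)
    (hMsymm : ∀ f g : M, BM f g = BM g f)
    (hV : ∀ u v : V, (∀ n : ℕ, n • u ≤ v) → u ≤ 0)
    (hLdef : ∀ f : L, BL f f = 0 → f = 0)
    (hMdef : ∀ g : M, BM g g = 0 → g = 0)
    (T : L →ₗ[ℝ] M)
    (hThom : ∀ f : L, T |f| = |T f|)
    (hTsurj : Function.Surjective T)
    (S : M →ₗ[ℝ] L)
    (hadj : ∀ (f : L) (g : M), BM (T f) g = BL f (S g)) :
    ∀ g : M, S |g| = |S g| := by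
  -- T is positive
  have hTpos : ∀ x : L, 0 ≤ x → 0 ≤ T x := by
    intro x hx
    have : T x = |T x| := by rw [← hThom, abs_of_nonneg hx]
    rw [this]; exact abs_nonneg _
  -- T preserves disjointness
  have hTdis : ∀ a b : L, a ⊓ b = 0 → T a ⊓ T b = 0 := by
    intro a b hab
    have h1 : |b - a| = a + b := by
      have := two_nsmul_inf_eq_add_sub_abs_sub a b
      rw [hab, smul_zero] at this
      have := this.symm
      rw [sub_eq_zero] at this
      exact this.symm
    have h2 : |T b - T a| = T a + T b := by
      rw [← map_sub, ← hThom, h1, map_add]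
    haveI : IsOrderedAddMonoid M := ⟨fun a b h c => by rw [add_comm a c, add_comm b c]; exact CovariantClass.elim c h, fun a b h c => CovariantClass.elim c h⟩
    rw [inf_eq_half_smul_add_sub_abs_sub' ℝ, h2, sub_self, smul_zero]
  -- the operator R = S ∘ T, via the forms
  have hBR : ∀ x y : L, BL x (S (T y)) = BM (T x) (T y) := fun x y => (hadj x (T y)).symm
  -- R is positive
  have hRpos : ∀ a : L, 0 ≤ a → 0 ≤ S (T a) := by
    intro a ha
    set x := (S (T a))⁻ with hx
    have hx0 : 0 ≤ x := negPart_nonneg _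
    have hsplit : S (T a) = (S (T a))⁺ - (S (T a))⁻ := (posPart_sub_negPart _).symm
    have h2 : BL x ((S (T a))⁺) = 0 :=
      hLortho _ _ (by rw [inf_comm]; exact posPart_inf_negPart_eq_zero _)
    have h1 : BL x x = - BL x (S (T a)) := by
      rw [hsplit, map_sub, h2, zero_sub, neg_neg]
    have h4 : 0 ≤ BM (T x) (T a) := hMpos _ _ (hTpos x hx0) (hTpos a ha)
    have hsum : BL x x + BM (T x) (T a) = 0 := by
      rw [← hBR, h1, neg_add_cancel]
    have h5 : BL x x ≤ 0 := hsum ▸ le_add_of_nonneg_right h4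
    have h6 : 0 ≤ BL x x := hLpos x x hx0 hx0
    have h7 : x = 0 := hLdef x (le_antisymm h5 h6)
    rw [hsplit, ← hx, h7, sub_zero]
    exact posPart_nonneg _
  -- disjointness lemma: a ⊓ b = 0 → a ⊓ S(T b) = 0
  have hD : ∀ a b : L, 0 ≤ a → 0 ≤ b → a ⊓ b = 0 → a ⊓ S (T b) = 0 := by
    intro a b ha hb hab
    set d := a ⊓ S (T b) with hd
    have hd0 : 0 ≤ d := le_inf ha (hRpos b hb)
    have hle1 : BL d d ≤ BL d (S (T b)) := by
      have h := hLpos d (S (T b) - d) hd0 (sub_nonneg.2 inf_le_right)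
      rw [map_sub] at h
      exact sub_nonneg.mp h
    have hle2 : BL d (S (T b)) ≤ BL a (S (T b)) := by
      have h := hLpos (a - d) (S (T b)) (sub_nonneg.2 inf_le_left) (hRpos b hb)
      rw [map_sub, LinearMap.sub_apply] at h
      exact sub_nonneg.mp h
    have h0 : BL a (S (T b)) = 0 := by
      rw [hBR]; exact hMortho _ _ (hTdis a b hab)
    have h5 : BL d d = 0 :=
      le_antisymm (h0 ▸ hle1.trans hle2) (hLpos d d hd0 hd0)
    exact hLdef d h5
  intro g
  obtain ⟨f, rfl⟩ := hTsurj g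
  have hdis : S (T f⁺) ⊓ S (T f⁻) = 0 := by
    have h1 : f⁺ ⊓ S (T f⁻) = 0 :=
      hD _ _ (posPart_nonneg f) (negPart_nonneg f) (posPart_inf_negPart_eq_zero f)
    have h2 : S (T f⁻) ⊓ S (T f⁺) = 0 :=
      hD _ _ (hRpos _ (negPart_nonneg f)) (posPart_nonneg f) (by rw [inf_comm]; exact h1)
    rw [inf_comm]; exact h2
  have e1 : S |T f| = S (T f⁺) + S (T f⁻) := by
    rw [← hThom, ← posPart_add_negPart f, map_add, map_add]
  have e2 : S (T f) = S (T f⁺) - S (T f⁻) := by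
    conv_lhs => rw [← posPart_sub_negPart f]
    rw [map_sub, map_sub]
  have habs : |S (T f⁺) - S (T f⁻)| = S (T f⁺) + S (T f⁻) := by
    have := two_nsmul_inf_eq_add_sub_abs_sub (S (T f⁺)) (S (T f⁻))
    rw [hdis, smul_zero] at this
    have h := this.symm
    rw [sub_eq_zero] at h
    rw [abs_sub_comm]
    exact h.symm
  rw [e1, e2, habs]
end

section
/- Let L, M be orthosymmetric spaces over an Archimedean vector lattice V with L, M definite, and let T : L → M be a lattice homomorphism admitting an adjoint T*. Then ker T = ker(T*T); consequently, since T*T is an orthomorphism and kernels of orthomorphisms are bands, ker T is a band of L, i.e., T is a normal lattice homomorphism. -/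
private lemma stmt18_sup_double {α : Type*} [AddCommGroup α] [Lattice α]
    [CovariantClass α α (· + ·) (· ≤ ·)] (a b : α) :
    a ⊔ b + a ⊔ b = a + b + |b - a| := by
  have e1 : a ⊓ b + a ⊔ b = a + b := inf_add_sup a b
  have e2 : a ⊔ b - a ⊓ b = |b - a| := sup_sub_inf_eq_abs_sub a b
  calc a ⊔ b + a ⊔ b = (a ⊓ b + a ⊔ b) + (a ⊔ b - a ⊓ b) := by abel
    _ = a + b + |b - a| := by rw [e1, e2]

theorem stmt18 {L M V : Type*}
    [AddCommGroup L] [Lattice L] [Module ℝ L]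
    [CovariantClass L L (· + ·) (· ≤ ·)]
    [AddCommGroup M] [Lattice M] [Module ℝ M]
    [CovariantClass M M (· + ·) (· ≤ ·)]
    [AddCommGroup V] [Lattice V] [Module ℝ V]
    [CovariantClass V V (· + ·) (· ≤ ·)]
    (BL : L →ₗ[ℝ] L →ₗ[ℝ] V)
    (hLpos : ∀ f g : L, 0 ≤ f → 0 ≤ g → 0 ≤ BL f g)
    (hLortho : ∀ f g : L, f ⊓ g = 0 → BL f g = 0)
    (hLsymm : ∀ f g : L, BL f g = BL g f)
    (BM : M →ₗ[ℝ] M →ₗ[ℝ] V)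
    (hMpos : ∀ f g : M, 0 ≤ f → 0 ≤ g → 0 ≤ BM f g)
    (hMortho : ∀ f g : M, f ⊓ g = 0 → BM f g = 0)
    (hMsymm : ∀ f g : M, BM f g = BM g f)
    (hV : ∀ u v : V, (∀ n : ℕ, n • u ≤ v) → u ≤ 0)
    (hLdef : ∀ f : L, BL f f = 0 → f = 0)
    (hMdef : ∀ g : M, BM g g = 0 → g = 0)
    (T : L →ₗ[ℝ] M)
    (hThom : ∀ f : L, T |f| = |T f|)
    (S : M →ₗ[ℝ] L)
    (hadj : ∀ (f : L) (g : M), BM (T f) g = BL f (S g)) :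
    -- ker T = ker (T* T)
    (∀ f : L, T f = 0 ↔ S (T f) = 0) ∧
    -- ker T is a band of L : it is solid and closed under existing suprema
    (∀ f g : L, |f| ≤ |g| → T g = 0 → T f = 0) ∧
    (∀ (A : Set L) (b : L), (∀ x ∈ A, T x = 0) → IsLUB A b → T b = 0) := by
  -- T is positive
  have Tpos : ∀ f : L, 0 ≤ f → 0 ≤ T f := by
    intro f hf
    have h : T f = |T f| := by rw [← hThom, abs_of_nonneg hf]
    rw [h]; exact abs_nonneg _
  -- T is monotone
  have Tmono : ∀ f g : L, f ≤ g → T f ≤ T g := by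
    intro f g h
    have h2 := Tpos (g - f) (sub_nonneg.2 h)
    rw [map_sub] at h2
    exact sub_nonneg.1 h2
  -- squeeze lemma : for nonneg f, g, BL f g = 0 implies disjointness
  have squeeze : ∀ f g : L, 0 ≤ f → 0 ≤ g → BL f g = 0 → f ⊓ g = 0 := by
    intro f g hf hg h
    set c := f ⊓ g with hc
    have hcn : 0 ≤ c := le_inf hf hg
    have h1 : 0 ≤ BL (f - c) g := hLpos _ _ (sub_nonneg.2 inf_le_left) hg
    have h2 : 0 ≤ BL c (g - c) := hLpos _ _ hcn (sub_nonneg.2 inf_le_right)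
    have key : BL f g = BL (f - c) g + BL c (g - c) + BL c c := by
      simp only [map_sub, LinearMap.sub_apply]; abel
    have hkey : BL (f - c) g + BL c (g - c) + BL c c = 0 := key ▸ h
    have hle : BL c c ≤ 0 := by
      have : BL c c = -(BL (f - c) g + BL c (g - c)) := by
        rw [eq_neg_iff_add_eq_zero, add_comm]
        exact hkey
      rw [this]
      exact neg_nonpos.2 (add_nonneg h1 h2)
    exact hLdef c (le_antisymm hle (hLpos _ _ hcn hcn))
  -- T preserves suprema
  have Tsup : ∀ f g : L, T (f ⊔ g) = T f ⊔ T g := by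
    intro f g
    have h1 : f ⊔ g + f ⊔ g = f + g + |g - f| := stmt18_sup_double f g
    have h2 : T (f ⊔ g) + T (f ⊔ g) = T f ⊔ T g + T f ⊔ T g := by
      have h3 := congrArg T h1
      rw [map_add, map_add, map_add, hThom, map_sub] at h3
      rw [h3, stmt18_sup_double (T f) (T g)]
    have h4 : (2 : ℝ) • T (f ⊔ g) = (2 : ℝ) • (T f ⊔ T g) := by
      rw [two_smul, two_smul]; exact h2
    have h5 := congrArg (fun z => (2 : ℝ)⁻¹ • z) h4
    simpa [smul_smul] using h5
  -- S ∘ T is positive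
  have Rpos : ∀ g : L, 0 ≤ g → 0 ≤ S (T g) := by
    intro g hg
    set u := S (T g) with hu
    have h1 : BL u⁻ u = BM (T u⁻) (T g) := (hadj u⁻ (T g)).symm
    have h2 : 0 ≤ BL u⁻ u := h1 ▸ hMpos _ _ (Tpos _ (negPart_nonneg u)) (Tpos _ hg)
    have h3 : BL u⁻ u⁺ - BL u⁻ u⁻ = BL u⁻ u := by
      rw [← map_sub, posPart_sub_negPart]
    have h4 : BL u⁻ u⁺ = 0 := hLortho _ _ (by rw [inf_comm]; exact posPart_inf_negPart_eq_zero u)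
    have h5 : BL u⁻ u⁻ ≤ 0 := by
      have : BL u⁻ u = -(BL u⁻ u⁻) := by rw [← h3, h4, zero_sub]
      rw [this] at h2
      exact neg_nonneg.1 h2
    have h6 : u⁻ = 0 := hLdef _ (le_antisymm h5 (hLpos _ _ (negPart_nonneg u) (negPart_nonneg u)))
    exact negPart_eq_zero.1 h6
  refine ⟨?_, ?_, ?_⟩
  · -- ker T = ker (T* T)
    intro f
    constructor
    · intro h; rw [h, map_zero]
    · intro h
      apply hMdef
      rw [hadj, h, map_zero]
  · -- solid
    intro f g h hg
    have h1 : |T f| ≤ |T g| := by rw [← hThom, ← hThom]; exact Tmono _ _ h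
    rw [hg, abs_zero] at h1
    have h2 : |T f| = (0 : M) := le_antisymm h1 (abs_nonneg (T f))
    have h3 : T f ≤ 0 := (le_abs_self (T f)).trans h2.le
    have h4 : (0 : M) ≤ T f := by
      have h5 : -T f ≤ |T f| := neg_le_abs (T f)
      rw [h2] at h5
      simpa using h5
    exact le_antisymm h3 h4
  · -- closed under existing suprema
    intro A b hA hb
    rcases A.eq_empty_or_nonempty with rfl | ⟨a, ha⟩
    · -- empty set : b is a least element, hence b = 0
      have hub : ∀ x : L, x ∈ upperBounds (∅ : Set L) := by
        intro x; simp [upperBounds]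
      have h1 : b ≤ 0 := hb.2 (hub 0)
      have h2 : b ≤ b + b := hb.2 (hub (b + b))
      have h3 : 0 ≤ b := le_of_add_le_add_left (a := b) (by simpa using h2)
      have : b = 0 := le_antisymm h1 h3
      rw [this, map_zero]
    · have hab : a ≤ b := hb.1 ha
      set y := b - a with hy
      have hyn : 0 ≤ y := sub_nonneg.2 hab
      set w := S (T y) with hw
      have hwpos : 0 ≤ w := Rpos y hyn
      -- each (x ⊔ a - a) is a nonneg kernel element below y
      have hker : ∀ x ∈ A, T (x ⊔ a - a) = 0 := by
        intro x hx
        rw [map_sub, Tsup, hA x hx, hA a ha]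
        simp
      have hnn : ∀ x : L, (0 : L) ≤ x ⊔ a - a := fun x => sub_nonneg.2 le_sup_right
      -- each is disjoint from w
      have hdisj : ∀ x ∈ A, (x ⊔ a - a) ⊓ w = 0 := by
        intro x hx
        apply squeeze _ _ (hnn x) hwpos
        rw [hw, ← hadj, hker x hx, map_zero, LinearMap.zero_apply]
      -- y ⊓ w = 0 by the lub property
      have hbw : y ⊓ w = 0 := by
        have hge : 0 ≤ y ⊓ w := le_inf hyn hwpos
        have hstep : ∀ x ∈ A, x ⊔ a - a ≤ y - y ⊓ w := by
          intro x hx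
          have hxy : x ⊔ a - a ≤ y := by
            have : x ⊔ a ≤ b := sup_le (hb.1 hx) hab
            exact sub_le_sub_right this a
          have hle1 : y ⊓ w ≤ (y - (x ⊔ a - a)) + ((x ⊔ a - a) ⊓ w) := by
            rw [add_inf]
            refine le_inf ?_ ?_
            · exact inf_le_left.trans (le_of_eq (by abel))
            · exact inf_le_right.trans (le_add_of_nonneg_left (sub_nonneg.2 hxy))
          rw [hdisj x hx, add_zero] at hle1
          -- y ⊓ w ≤ y - (x ⊔ a - a)  gives  x ⊔ a - a ≤ y - y ⊓ w
          calc x ⊔ a - a = y - (y - (x ⊔ a - a)) := by abel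
            _ ≤ y - y ⊓ w := sub_le_sub_left hle1 y
        have hub : (y - y ⊓ w) + a ∈ upperBounds A := by
          intro x hx
          have h1 : x ≤ x ⊔ a := le_sup_left
          have h2 : x ⊔ a = (x ⊔ a - a) + a := by abel
          calc x ≤ x ⊔ a := h1
            _ = (x ⊔ a - a) + a := h2
            _ ≤ (y - y ⊓ w) + a := add_le_add_left (hstep x hx) a
        have hble : b ≤ (y - y ⊓ w) + a := hb.2 hub
        have hyle : y ≤ y - y ⊓ w := by
          rw [hy]
          calc b - a ≤ ((y - y ⊓ w) + a) - a := sub_le_sub_right hble a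
            _ = y - y ⊓ w := by abel
        have hle : y ⊓ w ≤ 0 := by
          have := sub_le_sub_left hyle y
          simpa using this
        exact le_antisymm hle hge
      have hTy : T y = 0 := by
        apply hMdef
        rw [hadj]
        exact hLortho y w hbw
      have hb0 : T b = T y + T a := by
        rw [hy, map_sub]; abel
      rw [hb0, hTy, hA a ha, add_zero]
end

section
/- Let L = C[−1,1] with the orthosymmetric product ⟨f,g⟩ = fg (pointwise product), and let T : L → L be (Tf)(x) = x·∫₋₁¹ f(s) ds. Then T has no adjoint: there is no linear R : L → L with ⟨Tf,g⟩ = ⟨f,Rg⟩ for all f,g ∈ L. -/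
open MeasureTheory intervalIntegral

/-- on `L = C[-1,1]` with the orthosymmetric product
`⟨f,g⟩ = f*g`, the operator `(Tf)(x) = x ∫_{-1}^{1} f(s) ds` has no adjoint:
there is no linear `R` with `(Tf)·g = f·(Rg)` for all `f, g`. -/
theorem stmt19 :
    ¬ ∃ R : C(Set.Icc (-1:ℝ) 1, ℝ) →ₗ[ℝ] C(Set.Icc (-1:ℝ) 1, ℝ),
      ∀ f g : C(Set.Icc (-1:ℝ) 1, ℝ),
        (ContinuousMap.mk
            (fun x : Set.Icc (-1:ℝ) 1 =>
              (x : ℝ) * ∫ s in (-1:ℝ)..1,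
                f (Set.projIcc (-1) 1 (by norm_num) s))
            (by fun_prop)) * g
          = f * R g := by
  rintro ⟨R, hR⟩
  set idc : C(Set.Icc (-1:ℝ) 1, ℝ) := ⟨fun x => (x:ℝ), by fun_prop⟩ with hidc
  have hint : (∫ s in (-1:ℝ)..1,
      (idc (Set.projIcc (-1) 1 (by norm_num) s) : ℝ)) = 0 := by
    have hcg : ∀ s ∈ Set.uIcc (-1:ℝ) 1,
        (idc (Set.projIcc (-1) 1 (by norm_num) s) : ℝ) = s := by
      intro s hs
      rw [Set.uIcc_of_le (by norm_num)] at hs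
      rw [hidc]
      simp only [ContinuousMap.coe_mk]
      rw [Set.projIcc_of_mem _ hs]
    rw [intervalIntegral.integral_congr hcg, integral_id]
    norm_num
  have one_mem : (1:ℝ) ∈ Set.Icc (-1:ℝ) 1 := by norm_num
  have h1 := ContinuousMap.congr_fun (hR 1 1) ⟨1, one_mem⟩
  have h2 := ContinuousMap.congr_fun (hR idc 1) ⟨1, one_mem⟩
  simp only [ContinuousMap.mul_apply, ContinuousMap.coe_mk, ContinuousMap.one_apply,
    hint, intervalIntegral.integral_const, smul_eq_mul] at h1 h2
  simp [idc] at h2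
  rw [← h2] at h1
  norm_num at h1
end
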